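/- arXiv:2207.09758 — 11 statements merged into one kernel-verified Lean document; each statement's English description precedes it below -/
import Mathlib

section
/- Let n ≥ 1, let c ∈ ℝ, and let ν be a nonnegative finite Borel measure on ℝ with compact support satisfying ν({0}) = 0 and ∫_ℝ |s|⁻¹ dν(s) < ∞. Then for every convex function f : ℝⁿ → ℝ and every x ∈ ℝⁿ the function s ↦ (f(s·x) − f(0))/s² is ν-integrable, and the function Ψ_{ν,c}(f) : ℝⁿ → ℝ given by Ψ_{ν,c}(f)(x) = c·f(0) + ∫_ℝ (f(s·x) − f(0))/s² dν(s) is convex on ℝⁿ. -/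
open MeasureTheory

/-- The map `Ψ_{ν,c}` from the paper: `Ψ_{ν,c}(f)(x) = c·f(0) + ∫ (f(s•x) − f(0))/s² dν(s)`. -/
noncomputable def PsiGL (n : ℕ) (ν : Measure ℝ) (c : ℝ)
    (f : EuclideanSpace ℝ (Fin n) → ℝ) (x : EuclideanSpace ℝ (Fin n)) : ℝ :=
  c * f 0 + ∫ s, (f (s • x) - f 0) / s ^ 2 ∂ν

/-- A convex function on ℝ has a linear bound near 0 on a compact interval. -/
lemma convex_slope_bound {h : ℝ → ℝ} (hh : ConvexOn ℝ Set.univ h) {R : ℝ} (hR : 0 < R) :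
    ∃ M : ℝ, ∀ s : ℝ, s ≠ 0 → |s| ≤ R → |h s - h 0| ≤ M * |s| := by
  refine ⟨max |(h (-R) - h 0) / (-R - 0)| |(h R - h 0) / (R - 0)|, fun s hs hsR => ?_⟩
  have hslope : |(h s - h 0) / (s - 0)| ≤
      max |(h (-R) - h 0) / (-R - 0)| |(h R - h 0) / (R - 0)| := by
    have hle : (h (-R) - h 0) / (-R - 0) ≤ (h s - h 0) / (s - 0) :=
      hh.secant_mono (Set.mem_univ 0) (Set.mem_univ (-R)) (Set.mem_univ s)
        (by linarith) hs (by cases abs_le.mp hsR; linarith)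
    have hge : (h s - h 0) / (s - 0) ≤ (h R - h 0) / (R - 0) :=
      hh.secant_mono (Set.mem_univ 0) (Set.mem_univ s) (Set.mem_univ R)
        hs (by linarith) (by cases abs_le.mp hsR; linarith)
    rw [abs_le]
    constructor
    · exact le_trans (neg_le_neg (le_max_left _ _)) (le_trans (neg_abs_le _) hle)
    · exact le_trans hge (le_trans (le_abs_self _) (le_max_right _ _))
  calc |h s - h 0| = |(h s - h 0) / (s - 0)| * |s| := by
        rw [sub_zero, abs_div, div_mul_cancel₀]
        exact abs_ne_zero.mpr hs
    _ ≤ _ := by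
        apply mul_le_mul_of_nonneg_right hslope (abs_nonneg s)

theorem stmt0 (n : ℕ) (hn : 1 ≤ n) (c : ℝ) (ν : Measure ℝ) [IsFiniteMeasure ν]
    (hcs : ∃ K : Set ℝ, IsCompact K ∧ ν Kᶜ = 0)
    (h0 : ν {0} = 0)
    (hint : Integrable (fun s : ℝ => |s|⁻¹) ν)
    (f : EuclideanSpace ℝ (Fin n) → ℝ) (hf : ConvexOn ℝ Set.univ f) :
    (∀ x : EuclideanSpace ℝ (Fin n),
      Integrable (fun s : ℝ => (f (s • x) - f 0) / s ^ 2) ν) ∧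
    ConvexOn ℝ Set.univ (PsiGL n ν c f) := by
  -- continuity of f
  have hfc : Continuous f := by
    rw [← continuousOn_univ]
    exact hf.continuousOn isOpen_univ
  obtain ⟨K, hK, hKc⟩ := hcs
  obtain ⟨R₀, hR₀⟩ := hK.isBounded.subset_closedBall 0
  set R : ℝ := max R₀ 1 with hRdef
  have hR : 0 < R := lt_of_lt_of_le one_pos (le_max_right _ _)
  have haeK : ∀ᵐ s ∂ν, s ∈ K := by
    rw [MeasureTheory.ae_iff]
    exact hKc
  have hae0 : ∀ᵐ s ∂ν, s ≠ 0 := by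
    rw [MeasureTheory.ae_iff]
    simpa using h0
  have haeR : ∀ᵐ s ∂ν, |s| ≤ R := by
    filter_upwards [haeK] with s hs
    have := hR₀ hs
    rw [Real.closedBall_eq_Icc] at this
    have h1 : -R₀ ≤ s := by simpa using this.1
    have h2 : s ≤ R₀ := by simpa using this.2
    rw [abs_le]
    constructor
    · have : -R ≤ -R₀ := by simp [hRdef]
      linarith
    · exact h2.trans (le_max_left _ _)
  have hint' : ∀ x : EuclideanSpace ℝ (Fin n),
      Integrable (fun s : ℝ => (f (s • x) - f 0) / s ^ 2) ν := by
    intro x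
    -- the convex function along the line
    have hconv : ConvexOn ℝ Set.univ (fun s : ℝ => f (s • x)) := by
      have := hf.comp_affineMap ((LinearMap.toSpanSingleton ℝ _ x).toAffineMap)
      simpa [Function.comp_def, LinearMap.toSpanSingleton_apply] using this
    obtain ⟨M, hM⟩ := convex_slope_bound hconv hR
    simp only [zero_smul] at hM
    have hmeas : AEStronglyMeasurable (fun s : ℝ => (f (s • x) - f 0) / s ^ 2) ν := by
      apply Measurable.aestronglyMeasurable
      exact ((hfc.comp (continuous_id.smul continuous_const)).measurable.sub
        measurable_const).div ((continuous_pow 2).measurable)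
    apply Integrable.mono' (hint.const_mul |M|) hmeas
    filter_upwards [haeR, hae0] with s hsR hs0
    have hs2 : (0:ℝ) < s ^ 2 := by positivity
    have hMs : |f (s • x) - f 0| ≤ |M| * |s| :=
      (hM s hs0 hsR).trans (mul_le_mul_of_nonneg_right (le_abs_self M) (abs_nonneg s))
    have h1 : ‖(f (s • x) - f 0) / s ^ 2‖ ≤ |M| * |s| / s ^ 2 := by
      rw [Real.norm_eq_abs, abs_div, abs_of_pos hs2]
      exact div_le_div_of_nonneg_right hMs hs2.le
    refine h1.trans (le_of_eq ?_)
    have hss : s ^ 2 = |s| * |s| := by rw [← abs_mul, sq, abs_mul_self]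
    rw [hss, mul_div_assoc, div_mul_eq_div_div, div_self (abs_ne_zero.mpr hs0), one_div]
  refine ⟨hint', ⟨convex_univ, ?_⟩⟩
  intro x _ y _ a b ha hb hab
  -- pointwise convexity of the integrand
  have hpt : ∀ s : ℝ, (f (s • (a • x + b • y)) - f 0) / s ^ 2 ≤
      a * ((f (s • x) - f 0) / s ^ 2) + b * ((f (s • y) - f 0) / s ^ 2) := by
    intro s
    rcases eq_or_ne s 0 with rfl | hs
    · simp
    have hs2 : (0:ℝ) < s ^ 2 := by positivity
    have key : f (s • (a • x + b • y)) - f 0 ≤ a * (f (s • x) - f 0) + b * (f (s • y) - f 0) := by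
      have h1 : s • (a • x + b • y) = a • (s • x) + b • (s • y) := by
        rw [smul_add, smul_comm s a, smul_comm s b]
      have h2 := hf.2 (Set.mem_univ (s • x)) (Set.mem_univ (s • y)) ha hb hab
      simp only [smul_eq_mul] at h2
      have h3 : a * f 0 + b * f 0 = f 0 := by rw [← add_mul, hab, one_mul]
      rw [h1]
      linarith
    calc (f (s • (a • x + b • y)) - f 0) / s ^ 2
        ≤ (a * (f (s • x) - f 0) + b * (f (s • y) - f 0)) / s ^ 2 :=
          div_le_div_of_nonneg_right key hs2.le
      _ = a * ((f (s • x) - f 0) / s ^ 2) + b * ((f (s • y) - f 0) / s ^ 2) := by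
          ring
  have hI : ∫ s, (f (s • (a • x + b • y)) - f 0) / s ^ 2 ∂ν ≤
      a * ∫ s, (f (s • x) - f 0) / s ^ 2 ∂ν + b * ∫ s, (f (s • y) - f 0) / s ^ 2 ∂ν := by
    rw [← integral_const_mul a, ← integral_const_mul b, ← integral_add
      ((hint' x).const_mul a) ((hint' y).const_mul b)]
    exact integral_mono (hint' _) (((hint' x).const_mul a).add ((hint' y).const_mul b)) hpt
  simp only [PsiGL, smul_eq_mul]
  set Ix := ∫ s, (f (s • x) - f 0) / s ^ 2 ∂ν
  set Iy := ∫ s, (f (s • y) - f 0) / s ^ 2 ∂ν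
  have key : a * (c * f 0 + Ix) + b * (c * f 0 + Iy) = c * f 0 + (a * Ix + b * Iy) := by
    linear_combination (c * f 0) * hab
  rw [key]
  linarith [hI]
end

section
/- Let n ≥ 1, let c ∈ ℝ, and let ν be a nonnegative finite Borel measure on ℝ with compact support satisfying ν({0}) = 0 and ∫_ℝ |s|⁻¹ dν(s) < ∞. If convex functions f_j : ℝⁿ → ℝ converge to a convex function f : ℝⁿ → ℝ uniformly on every compact subset of ℝⁿ, then Ψ_{ν,c}(f_j)(x) → Ψ_{ν,c}(f)(x) for every x ∈ ℝⁿ. -/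
open MeasureTheory

lemma core_bound {E : Type*} [NormedAddCommGroup E] [NormedSpace ℝ E]
    {g : E → ℝ} (h : ConvexOn ℝ Set.univ g) (x : E) {R s : ℝ}
    (hR : 0 < R) (hs0 : 0 ≤ s) (hsR : s ≤ R) :
    |g (s • x) - g 0| ≤ (s / R) * max |g (R • x) - g 0| |g ((-R) • x) - g 0| := by
  set t := s / R with ht
  have ht0 : 0 ≤ t := div_nonneg hs0 hR.le
  have ht1 : t ≤ 1 := (div_le_one hR).2 hsR
  set M := max |g (R • x) - g 0| |g ((-R) • x) - g 0| with hM
  have hM0 : 0 ≤ M := le_trans (abs_nonneg _) (le_max_left _ _)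
  rw [abs_le]
  constructor
  · -- lower bound
    have hRs : (0:ℝ) < R + s := by linarith
    set u := s / (R + s) with hu
    have hu0 : 0 ≤ u := div_nonneg hs0 hRs.le
    have hu1 : u ≤ 1 := by
      rw [hu, div_le_one hRs]; linarith
    have key := h.2 (Set.mem_univ (s • x)) (Set.mem_univ ((-R) • x))
      (by linarith : (0:ℝ) ≤ 1 - u) hu0 (by ring)
    have heq : (1 - u) • (s • x) + u • ((-R) • x) = (0 : E) := by
      rw [smul_smul, smul_smul, ← add_smul]
      have : (1 - u) * s + u * (-R) = 0 := by
        rw [hu]; field_simp; ring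
      rw [this, zero_smul]
    rw [heq] at key
    simp only [smul_eq_mul] at key
    have hfac : t * (1 - u) = u := by
      rw [ht, hu]; field_simp; ring
    have h1u : 0 < 1 - u := by
      rw [hu]; rw [sub_pos, div_lt_one hRs]; linarith
    -- key : g 0 ≤ (1-u) * g (s•x) + u * g ((-R)•x)
    have hm : g ((-R) • x) - g 0 ≤ M :=
      le_trans (le_abs_self _) (le_max_right _ _)
    -- want : -(t*M) ≤ g (s•x) - g 0
    nlinarith [mul_le_mul_of_nonneg_left hm (mul_pos h1u (lt_of_lt_of_le (by positivity : (0:ℝ) < 1) le_rfl)).le]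
  · -- upper bound
    have key := h.2 (Set.mem_univ (R • x)) (Set.mem_univ (0 : E))
      ht0 (by linarith : (0:ℝ) ≤ 1 - t) (by ring)
    have heq : t • (R • x) + (1 - t) • (0 : E) = s • x := by
      rw [smul_zero, add_zero, smul_smul]
      congr 1
      rw [ht]; field_simp
    rw [heq] at key
    simp only [smul_eq_mul] at key
    have hp : g (R • x) - g 0 ≤ M :=
      le_trans (le_abs_self _) (le_max_left _ _)
    nlinarith [mul_le_mul_of_nonneg_left hp ht0]

lemma slope_bound {E : Type*} [NormedAddCommGroup E] [NormedSpace ℝ E]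
    {g : E → ℝ} (h : ConvexOn ℝ Set.univ g) (x : E) {R s : ℝ}
    (hR : 0 < R) (hs : |s| ≤ R) :
    |g (s • x) - g 0| ≤ (|s| / R) * max |g (R • x) - g 0| |g ((-R) • x) - g 0| := by
  rcases le_or_gt 0 s with h0 | h0
  · rw [abs_of_nonneg h0] at hs ⊢
    exact core_bound h x hR h0 hs
  · rw [abs_of_neg h0] at hs ⊢
    have := core_bound h (-x) hR (by linarith : (0:ℝ) ≤ -s) hs
    have e1 : (-s) • (-x) = s • x := by simp
    have e2 : R • (-x) = (-R) • x := by simp [neg_smul, smul_neg]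
    have e3 : (-R) • (-x) = R • x := by simp [neg_smul, smul_neg]
    rw [e1, e2, e3] at this
    rw [max_comm] at this
    exact this

theorem stmt1 (n : ℕ) (hn : 1 ≤ n) (c : ℝ) (ν : Measure ℝ) [IsFiniteMeasure ν]
    (hcs : ∃ K : Set ℝ, IsCompact K ∧ ν Kᶜ = 0)
    (h0 : ν {0} = 0)
    (hint : Integrable (fun s : ℝ => |s|⁻¹) ν)
    (fs : ℕ → EuclideanSpace ℝ (Fin n) → ℝ) (f : EuclideanSpace ℝ (Fin n) → ℝ)
    (hfs : ∀ j, ConvexOn ℝ Set.univ (fs j)) (hf : ConvexOn ℝ Set.univ f)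
    (hunif : ∀ K : Set (EuclideanSpace ℝ (Fin n)), IsCompact K →
      TendstoUniformlyOn fs f Filter.atTop K) :
    ∀ x : EuclideanSpace ℝ (Fin n),
      Filter.Tendsto (fun j => PsiGL n ν c (fs j) x) Filter.atTop
        (nhds (PsiGL n ν c f x)) := by
  intro x
  -- pointwise convergence at each point
  have hpt : ∀ y : EuclideanSpace ℝ (Fin n),
      Filter.Tendsto (fun j => fs j y) Filter.atTop (nhds (f y)) := fun y =>
    (hunif {y} isCompact_singleton).tendsto_at rfl
  obtain ⟨K, hK, hKν⟩ := hcs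
  obtain ⟨R0, hR0⟩ := hK.isBounded.subset_closedBall 0
  set R : ℝ := max R0 1 with hRdef
  have hR : (0:ℝ) < R := lt_of_lt_of_le one_pos (le_max_right _ _)
  have hKR : ∀ s ∈ K, |s| ≤ R := fun s hs => by
    have := hR0 hs
    simp only [Metric.mem_closedBall, Real.dist_eq, sub_zero] at this
    exact le_trans this (le_max_left _ _)
  -- uniform-in-j bound constants
  have hb1 : BddAbove (Set.range fun j => |fs j (R • x) - fs j 0|) :=
    Filter.Tendsto.bddAbove_range (((hpt (R • x)).sub (hpt 0)).abs)
  have hb2 : BddAbove (Set.range fun j => |fs j ((-R) • x) - fs j 0|) :=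
    Filter.Tendsto.bddAbove_range (((hpt ((-R) • x)).sub (hpt 0)).abs)
  obtain ⟨C1, hC1⟩ := hb1
  obtain ⟨C2, hC2⟩ := hb2
  set C : ℝ := max (max C1 C2) (max |f (R • x) - f 0| |f ((-R) • x) - f 0|) with hCdef
  have hC0 : 0 ≤ C := le_trans (abs_nonneg _)
    (le_trans (le_max_left _ _) (le_max_right _ _))
  have hCj : ∀ j, max |fs j (R • x) - fs j 0| |fs j ((-R) • x) - fs j 0| ≤ C := by
    intro j
    refine le_trans (max_le_max (hC1 ⟨j, rfl⟩) (hC2 ⟨j, rfl⟩)) (le_max_left _ _)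
  -- measurability of convex functions (continuous in finite dim)
  have hcont : ∀ (g : EuclideanSpace ℝ (Fin n) → ℝ), ConvexOn ℝ Set.univ g → Continuous g := by
    intro g hg
    exact continuousOn_univ.mp (hg.continuousOn isOpen_univ)
  have hmeas : ∀ (g : EuclideanSpace ℝ (Fin n) → ℝ), ConvexOn ℝ Set.univ g →
      AEStronglyMeasurable (fun s : ℝ => (g (s • x) - g 0) / s ^ 2) ν := by
    intro g hg
    exact (((((hcont g hg).comp (continuous_id.smul continuous_const)).sub
      continuous_const).measurable).div ((measurable_id.pow_const 2))).aestronglyMeasurable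
  -- a.e. bound set
  have haeK : ∀ᵐ s ∂ν, s ∈ K ∧ s ≠ 0 := by
    have h1 : ∀ᵐ s ∂ν, s ∈ K := by
      rw [MeasureTheory.ae_iff]
      exact hKν
    have h2 : ∀ᵐ s ∂ν, s ≠ 0 := by
      rw [MeasureTheory.ae_iff]
      simpa using h0
    filter_upwards [h1, h2] with s hs hs' using ⟨hs, hs'⟩
  -- bound function
  have hbound_int : Integrable (fun s : ℝ => (C / R) * |s|⁻¹) ν := hint.const_mul _
  -- general bound lemma for convex g with constant D
  have hGB : ∀ (g : EuclideanSpace ℝ (Fin n) → ℝ), ConvexOn ℝ Set.univ g →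
      ∀ s : ℝ, s ∈ K → s ≠ 0 →
      |(g (s • x) - g 0) / s ^ 2|
        ≤ (max |g (R • x) - g 0| |g ((-R) • x) - g 0| / R) * |s|⁻¹ := by
    intro g hg s hsK hs0
    have hsR := hKR s hsK
    have habs : (0:ℝ) < |s| := abs_pos.2 hs0
    have key := slope_bound hg x hR hsR
    set M := max |g (R • x) - g 0| |g ((-R) • x) - g 0| with hMd
    rw [abs_div, abs_pow, sq_abs]
    rw [div_le_iff₀ (by positivity : (0:ℝ) < s^2)]
    have e : M / R * |s|⁻¹ * s ^ 2 = |s| / R * M := by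
      rw [← sq_abs s]; field_simp
    rw [e]; exact key
  -- tendsto of integrals by dominated convergence
  have hI : Filter.Tendsto (fun j => ∫ s, (fs j (s • x) - fs j 0) / s ^ 2 ∂ν)
      Filter.atTop (nhds (∫ s, (f (s • x) - f 0) / s ^ 2 ∂ν)) := by
    apply MeasureTheory.tendsto_integral_of_dominated_convergence
      (fun s => (C / R) * |s|⁻¹)
      (fun j => hmeas _ (hfs j)) hbound_int
    · intro j
      filter_upwards [haeK] with s hs
      rw [Real.norm_eq_abs]
      calc |(fs j (s • x) - fs j 0) / s ^ 2|
          ≤ (max |fs j (R • x) - fs j 0| |fs j ((-R) • x) - fs j 0| / R) * |s|⁻¹ :=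
            hGB _ (hfs j) s hs.1 hs.2
        _ ≤ (C / R) * |s|⁻¹ := by
            gcongr
            exact hCj j
    · apply Filter.Eventually.of_forall
      intro s
      rcases eq_or_ne s 0 with rfl | hs0
      · simp
      · have hs2 : (s:ℝ) ^ 2 ≠ 0 := pow_ne_zero 2 hs0
        exact (((hpt (s • x)).sub (hpt 0)).div_const _)
  -- combine
  unfold PsiGL
  exact (((hpt 0).const_mul c).add hI)
end

section
/- Let n ≥ 1, let c ∈ ℝ, and let ν be a nonnegative finite Borel measure on ℝ with compact support satisfying ν({0}) = 0 and ∫_ℝ |s|⁻¹ dν(s) < ∞. Then Ψ_{ν,c} is monotone, i.e. for all convex f, g : ℝⁿ → ℝ with f ≤ g pointwise one has Ψ_{ν,c}(f) ≤ Ψ_{ν,c}(g) pointwise, if and only if ∫_ℝ s⁻² dν(s) ≤ c (in particular the integral ∫_ℝ s⁻² dν(s) is finite). -/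
open MeasureTheory

lemma conv_bound (φ : ℝ → ℝ) (hφ : ConvexOn ℝ Set.univ φ) (R : ℝ) (hR : 0 < R) :
    ∃ L : ℝ, 0 ≤ L ∧ ∀ s : ℝ, |s| ≤ R → |φ s - φ 0| ≤ L * |s| := by
  set M : ℝ := max (max (φ R - φ 0) (φ (-R) - φ 0)) 0 with hM
  have hM0 : 0 ≤ M := le_max_right _ _
  refine ⟨M / R, div_nonneg hM0 hR.le, ?_⟩
  have up : ∀ s : ℝ, |s| ≤ R → φ s - φ 0 ≤ M / R * |s| := by
    intro s hs
    rcases le_total 0 s with h0s | hs0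
    · have key := hφ.2 (Set.mem_univ R) (Set.mem_univ (0:ℝ))
        (show (0:ℝ) ≤ s / R from div_nonneg h0s hR.le)
        (show (0:ℝ) ≤ 1 - s / R by
          have : s / R ≤ 1 := (div_le_one hR).2 (by rwa [abs_of_nonneg h0s] at hs)
          linarith)
        (by ring)
      have hsr : (s / R) • R + (1 - s / R) • (0:ℝ) = s := by
        rw [smul_eq_mul, smul_eq_mul, mul_zero, add_zero]
        field_simp
      rw [hsr] at key
      have hMR : φ R - φ 0 ≤ M := le_trans (le_max_left _ _) (le_max_left _ _)
      have : φ s - φ 0 ≤ s / R * (φ R - φ 0) := by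
        have := key; simp only [smul_eq_mul] at this; nlinarith
      calc φ s - φ 0 ≤ s / R * (φ R - φ 0) := this
        _ ≤ s / R * M := by
            apply mul_le_mul_of_nonneg_left hMR (div_nonneg h0s hR.le)
        _ = M / R * |s| := by rw [abs_of_nonneg h0s]; ring
    · have key := hφ.2 (Set.mem_univ (-R)) (Set.mem_univ (0:ℝ))
        (show (0:ℝ) ≤ -s / R from div_nonneg (by linarith) hR.le)
        (show (0:ℝ) ≤ 1 - -s / R by
          have : -s / R ≤ 1 := (div_le_one hR).2 (by rwa [abs_of_nonpos hs0] at hs)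
          linarith)
        (by ring)
      have hsr : (-s / R) • (-R) + (1 - -s / R) • (0:ℝ) = s := by
        rw [smul_eq_mul, smul_eq_mul, mul_zero, add_zero]
        field_simp
      rw [hsr] at key
      have hMR : φ (-R) - φ 0 ≤ M := le_trans (le_max_right _ _) (le_max_left _ _)
      have : φ s - φ 0 ≤ -s / R * (φ (-R) - φ 0) := by
        simp only [smul_eq_mul] at key; nlinarith
      calc φ s - φ 0 ≤ -s / R * (φ (-R) - φ 0) := this
        _ ≤ -s / R * M := by
            apply mul_le_mul_of_nonneg_left hMR (div_nonneg (by linarith) hR.le)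
        _ = M / R * |s| := by rw [abs_of_nonpos hs0]; ring
  intro s hs
  rw [abs_le]
  constructor
  · have h1 : φ s - φ 0 ≥ φ 0 - φ (-s) := by
      have key := hφ.2 (Set.mem_univ s) (Set.mem_univ (-s))
        (by norm_num : (0:ℝ) ≤ (1:ℝ)/2) (by norm_num : (0:ℝ) ≤ (1:ℝ)/2) (by norm_num)
      simp only [smul_eq_mul] at key
      have : (1:ℝ)/2 * s + 1/2 * (-s) = (0:ℝ) := by ring
      rw [this] at key
      linarith
    have h2 : φ (-s) - φ 0 ≤ M / R * |s| := by
      have := up (-s) (by rwa [abs_neg]); rwa [abs_neg] at this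
    linarith
  · exact up s hs

lemma psi_integrand_integrable {n : ℕ} (ν : Measure ℝ) [IsFiniteMeasure ν]
    (hcs : ∃ K : Set ℝ, IsCompact K ∧ ν Kᶜ = 0)
    (hint : Integrable (fun s : ℝ => |s|⁻¹) ν)
    (f : EuclideanSpace ℝ (Fin n) → ℝ) (hf : ConvexOn ℝ Set.univ f)
    (x : EuclideanSpace ℝ (Fin n)) :
    Integrable (fun s : ℝ => (f (s • x) - f 0) / s ^ 2) ν := by
  obtain ⟨K, hKc, hKn⟩ := hcs
  set φ : ℝ → ℝ := fun s => f (s • x) with hφdef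
  have hφ : ConvexOn ℝ Set.univ φ := by
    have := hf.comp_affineMap (LinearMap.toSpanSingleton ℝ _ x).toAffineMap
    simp [Function.comp, LinearMap.toSpanSingleton,
      LinearMap.smulRight] at this
    exact this
  have hφcont : Continuous φ := hφ.locallyLipschitz.continuous
  obtain ⟨r, hKr⟩ := hKc.isBounded.subset_closedBall 0
  set R : ℝ := max r 1 with hRdef
  have hR : 0 < R := lt_of_lt_of_le one_pos (le_max_right _ _)
  have hKR : ∀ s ∈ K, |s| ≤ R := by
    intro s hs
    have := hKr hs
    rw [Metric.mem_closedBall, Real.dist_eq, sub_zero] at this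
    exact le_trans this (le_max_left _ _)
  obtain ⟨L, hL0, hLip⟩ := conv_bound φ hφ R hR
  have hmeas : AEStronglyMeasurable (fun s : ℝ => (φ s - φ 0) / s ^ 2) ν :=
    (((hφcont.sub continuous_const).measurable).div
      ((continuous_pow 2).measurable)).aestronglyMeasurable
  have hae : ∀ᵐ s ∂ν, s ∈ K := by
    rw [ae_iff]
    exact hKn
  refine Integrable.mono' (hint.const_mul L) ?_ ?_
  · have h0 : φ 0 = f 0 := by simp [hφdef]
    simpa [hφdef, h0] using hmeas
  · filter_upwards [hae] with s hsK
    have hb := hLip s (hKR s hsK)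
    have h0 : φ 0 = f 0 := by simp [hφdef]
    rcases eq_or_ne s 0 with rfl | hs
    · simp
    · have hs2 : (0:ℝ) < s ^ 2 := by positivity
      rw [Real.norm_eq_abs, abs_div, abs_of_pos hs2, ← h0]
      rw [div_le_iff₀ hs2]
      calc |φ s - φ 0| ≤ L * |s| := hb
        _ = L * |s|⁻¹ * s ^ 2 := by
            have hs' : |s| ≠ 0 := abs_ne_zero.mpr hs
            rw [← sq_abs, sq]
            field_simp


theorem stmt2 (n : ℕ) (hn : 1 ≤ n) (c : ℝ) (ν : Measure ℝ) [IsFiniteMeasure ν]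
    (hcs : ∃ K : Set ℝ, IsCompact K ∧ ν Kᶜ = 0)
    (h0 : ν {0} = 0)
    (hint : Integrable (fun s : ℝ => |s|⁻¹) ν) :
    (∀ f g : EuclideanSpace ℝ (Fin n) → ℝ, ConvexOn ℝ Set.univ f →
        ConvexOn ℝ Set.univ g → (∀ y, f y ≤ g y) →
        ∀ x, PsiGL n ν c f x ≤ PsiGL n ν c g x) ↔
    (Integrable (fun s : ℝ => (s ^ 2)⁻¹) ν ∧ ∫ s, (s ^ 2)⁻¹ ∂ν ≤ c) := by
  have habs : ∀ s : ℝ, |s| / s ^ 2 = |s|⁻¹ := by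
    intro s
    rcases eq_or_ne s 0 with rfl | hs
    · simp
    · rw [← sq_abs, sq, div_mul_eq_div_div, div_self (abs_ne_zero.2 hs), one_div]
  constructor
  · intro H
    set x : EuclideanSpace ℝ (Fin n) := EuclideanSpace.single ⟨0, hn⟩ (1:ℝ) with hxdef
    have hx : ‖x‖ = 1 := by rw [hxdef, EuclideanSpace.norm_single]; norm_num
    -- Key inequality for each δ > 0
    have hkey : ∀ δ : ℝ, 0 < δ →
        Integrable (fun s : ℝ => min |s| δ / s ^ 2) ν ∧
        ∫ s, min |s| δ / s ^ 2 ∂ν ≤ c * δ := by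
      intro δ hδ
      set f : EuclideanSpace ℝ (Fin n) → ℝ := fun y => ‖y‖ - δ with hfdef
      set g : EuclideanSpace ℝ (Fin n) → ℝ := fun y => max (‖y‖ - δ) 0 with hgdef
      have hf : ConvexOn ℝ Set.univ f := by
        constructor
        · exact convex_univ
        · intro a _ b _ u v hu hv huv
          have hnorm := (convexOn_univ_norm (E := EuclideanSpace ℝ (Fin n))).2
            (Set.mem_univ a) (Set.mem_univ b) hu hv huv
          simp only [smul_eq_mul] at hnorm ⊢
          simp only [hfdef]
          nlinarith [hnorm]
      have hg : ConvexOn ℝ Set.univ g := by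
        have := hf.sup (convexOn_const (0:ℝ) convex_univ)
        simpa [hgdef, Pi.sup_def] using this
      have hfg : ∀ y, f y ≤ g y := fun y => le_max_left _ _
      have hIf : Integrable (fun s : ℝ => (f (s • x) - f 0) / s ^ 2) ν :=
        psi_integrand_integrable ν hcs hint f hf x
      have hIg : Integrable (fun s : ℝ => (g (s • x) - g 0) / s ^ 2) ν :=
        psi_integrand_integrable ν hcs hint g hg x
      have hfx : ∀ s : ℝ, f (s • x) - f 0 = |s| := by
        intro s
        simp [hfdef, norm_smul, hx]
      have hgx : ∀ s : ℝ, g (s • x) - g 0 = max (|s| - δ) 0 := by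
        intro s
        have : max (0 - δ) 0 = 0 := by rw [max_eq_right]; linarith
        simp [hgdef, norm_smul, hx, this, hδ.le]
      have hf0 : f 0 = -δ := by simp [hfdef]
      have hg0 : g 0 = 0 := by
        simp only [hgdef, norm_zero]
        rw [max_eq_right]; linarith
      have hmin : ∀ s : ℝ, |s| - max (|s| - δ) 0 = min |s| δ := by
        intro s
        rcases le_total (|s|) δ with h | h
        · rw [max_eq_right (by linarith), min_eq_left h]; ring
        · rw [max_eq_left (by linarith), min_eq_right h]; ring
      have hIf' : Integrable (fun s : ℝ => |s| / s ^ 2) ν := by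
        have := hIf
        simp only [hfx] at this
        exact this
      have hIg' : Integrable (fun s : ℝ => max (|s| - δ) 0 / s ^ 2) ν := by
        have := hIg
        simp only [hgx] at this
        exact this
      have hImin : Integrable (fun s : ℝ => min |s| δ / s ^ 2) ν :=
        (hIf'.sub hIg').congr (ae_of_all _ fun s => by simp only [Pi.sub_apply]; rw [div_sub_div_same, hmin])
      refine ⟨hImin, ?_⟩
      have hH := H f g hf hg hfg x
      unfold PsiGL at hH
      rw [show (∫ s, (f (s • x) - f 0) / s ^ 2 ∂ν) = ∫ s, |s| / s ^ 2 ∂ν from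
          integral_congr_ae (ae_of_all _ fun s => by show (f (s • x) - f 0) / s ^ 2 = |s| / s ^ 2; rw [hfx]),
        show (∫ s, (g (s • x) - g 0) / s ^ 2 ∂ν) = ∫ s, max (|s| - δ) 0 / s ^ 2 ∂ν from
          integral_congr_ae (ae_of_all _ fun s => by show (g (s • x) - g 0) / s ^ 2 = max (|s| - δ) 0 / s ^ 2; rw [hgx]),
        hf0, hg0] at hH
      -- hH : c * (-δ) + ∫ |s| / s^2 ≤ c * 0 + ∫ max (|s| - δ) 0 / s^2
      have hsub : ∫ s, min |s| δ / s ^ 2 ∂ν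
          = (∫ s, |s| / s ^ 2 ∂ν) - ∫ s, max (|s| - δ) 0 / s ^ 2 ∂ν := by
        rw [← integral_sub hIf' hIg']
        congr 1
        funext s
        rw [div_sub_div_same, hmin]
      rw [hsub]
      linarith
    -- normalized sequence
    set G : ℕ → ℝ → ℝ := fun k s => min (|s| * (k + 1)) 1 / s ^ 2 with hGdef
    have hGeq : ∀ k : ℕ, (fun s => G k s)
        = fun s => ((k : ℝ) + 1) * (min |s| (((k : ℝ) + 1)⁻¹) / s ^ 2) := by
      intro k
      funext s
      have hk : (0:ℝ) < (k : ℝ) + 1 := by positivity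
      rw [hGdef]
      simp only
      rw [mul_div_assoc']
      congr 1
      rw [mul_comm (|s|) _, mul_min_of_nonneg _ _ hk.le, mul_inv_cancel₀ hk.ne']
    have hGint : ∀ k : ℕ, Integrable (G k) ν := by
      intro k
      rw [show G k = fun s => G k s from rfl, hGeq k]
      exact ((hkey _ (by positivity)).1).const_mul _
    have hGle : ∀ k : ℕ, ∫ s, G k s ∂ν ≤ c := by
      intro k
      have hk : (0:ℝ) < (k : ℝ) + 1 := by positivity
      have h1 := (hkey (((k : ℝ) + 1)⁻¹) (by positivity)).2
      calc ∫ s, G k s ∂ν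
          = ((k : ℝ) + 1) * ∫ s, min |s| (((k : ℝ) + 1)⁻¹) / s ^ 2 ∂ν := by
            rw [show (∫ s, G k s ∂ν) = ∫ s, ((k : ℝ) + 1) * (min |s| (((k : ℝ) + 1)⁻¹) / s ^ 2) ∂ν from by rw [← hGeq k]]
            exact integral_const_mul _ _
        _ ≤ ((k : ℝ) + 1) * (c * ((k : ℝ) + 1)⁻¹) := by
            exact mul_le_mul_of_nonneg_left h1 hk.le
        _ = c := by field_simp
    have hGnn : ∀ k : ℕ, ∀ s : ℝ, 0 ≤ G k s := by
      intro k s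
      apply div_nonneg _ (sq_nonneg s)
      exact le_min (by positivity) one_pos.le
    have hGm : ∀ k : ℕ, Measurable (G k) := by
      intro k
      exact ((measurable_abs.mul_const _).min measurable_const).div
        (measurable_id.pow_const 2)
    have hGmono : Monotone fun k : ℕ => fun s => ENNReal.ofReal (G k s) := by
      intro k l hkl
      intro s
      apply ENNReal.ofReal_le_ofReal
      rcases eq_or_ne s 0 with rfl | hs
      · simp [hGdef]
      · have hs2 : (0:ℝ) < s ^ 2 := by positivity
        have hkl' : (k : ℝ) + 1 ≤ (l : ℝ) + 1 := by exact_mod_cast Nat.succ_le_succ hkl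
        have hmm : |s| * ((k:ℝ) + 1) ≤ |s| * ((l:ℝ) + 1) :=
          mul_le_mul_of_nonneg_left hkl' (abs_nonneg s)
        exact div_le_div_of_nonneg_right (min_le_min hmm le_rfl) hs2.le
    have hMeas : Measurable (fun s : ℝ => (s ^ 2)⁻¹) := (measurable_id.pow_const 2).inv
    have hinvnn : ∀ s : ℝ, (0:ℝ) ≤ (s ^ 2)⁻¹ := fun s => inv_nonneg.2 (sq_nonneg s)
    have hsup : ∀ s : ℝ, (⨆ k : ℕ, ENNReal.ofReal (G k s)) = ENNReal.ofReal ((s ^ 2)⁻¹) := by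
      intro s
      rcases eq_or_ne s 0 with rfl | hs
      · simp [hGdef]
      · have hs2 : (0:ℝ) < s ^ 2 := by positivity
        apply le_antisymm
        · refine iSup_le fun k => ENNReal.ofReal_le_ofReal ?_
          rw [hGdef]
          simp only
          rw [inv_eq_one_div]
          exact div_le_div_of_nonneg_right (min_le_right _ _) hs2.le
        · have habs0 : 0 < |s| := abs_pos.2 hs
          obtain ⟨k, hk⟩ := exists_nat_ge (|s|⁻¹)
          refine le_trans (le_of_eq ?_) (le_iSup (fun k : ℕ => ENNReal.ofReal (G k s)) k)
          congr 1
          rw [hGdef]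
          simp only
          rw [min_eq_right, inv_eq_one_div]
          have : (1:ℝ) ≤ |s| * (k:ℝ) := by
            calc (1:ℝ) = |s| * |s|⁻¹ := by rw [mul_inv_cancel₀ habs0.ne']
              _ ≤ |s| * (k:ℝ) := mul_le_mul_of_nonneg_left hk habs0.le
          nlinarith [habs0]
    have hlin : ∫⁻ s, ENNReal.ofReal ((s ^ 2)⁻¹) ∂ν ≤ ENNReal.ofReal c := by
      have h1 : ∫⁻ s, ENNReal.ofReal ((s ^ 2)⁻¹) ∂ν
          = ⨆ k : ℕ, ∫⁻ s, ENNReal.ofReal (G k s) ∂ν := by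
        rw [← lintegral_iSup (fun k => (hGm k).ennreal_ofReal) hGmono]
        exact lintegral_congr fun s => (hsup s).symm
      rw [h1]
      refine iSup_le fun k => ?_
      rw [← ofReal_integral_eq_lintegral_ofReal (hGint k) (ae_of_all _ (hGnn k))]
      exact ENNReal.ofReal_le_ofReal (hGle k)
    have hInt : Integrable (fun s : ℝ => (s ^ 2)⁻¹) ν := by
      refine ⟨hMeas.aestronglyMeasurable, ?_⟩
      rw [hasFiniteIntegral_iff_ofReal (ae_of_all _ hinvnn)]
      exact lt_of_le_of_lt hlin ENNReal.ofReal_lt_top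
    refine ⟨hInt, ?_⟩
    have hc0 : 0 ≤ c := le_trans (integral_nonneg (hGnn 0)) (hGle 0)
    rw [integral_eq_lintegral_of_nonneg_ae (ae_of_all _ hinvnn) hMeas.aestronglyMeasurable]
    calc (∫⁻ s, ENNReal.ofReal ((s ^ 2)⁻¹) ∂ν).toReal
        ≤ (ENNReal.ofReal c).toReal := ENNReal.toReal_mono ENNReal.ofReal_ne_top hlin
      _ = c := ENNReal.toReal_ofReal hc0
  · rintro ⟨hI, hc⟩ f g hf hg hfg x
    have hIf : Integrable (fun s : ℝ => (f (s • x) - f 0) / s ^ 2) ν :=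
      psi_integrand_integrable ν hcs hint f hf x
    have hIg : Integrable (fun s : ℝ => (g (s • x) - g 0) / s ^ 2) ν :=
      psi_integrand_integrable ν hcs hint g hg x
    have hIc : Integrable (fun s : ℝ => (g 0 - f 0) * (s ^ 2)⁻¹) ν := hI.const_mul _
    have hIpos : Integrable (fun s : ℝ => (g (s • x) - f (s • x)) / s ^ 2) ν := by
      refine ((hIg.sub hIf).add hIc).congr (ae_of_all _ fun s => ?_)
      simp only [Pi.add_apply, Pi.sub_apply, div_eq_mul_inv]
      ring
    have hsplit : (∫ s, (g (s • x) - g 0) / s ^ 2 ∂ν) - ∫ s, (f (s • x) - f 0) / s ^ 2 ∂ν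
        = (∫ s, (g (s • x) - f (s • x)) / s ^ 2 ∂ν) - (g 0 - f 0) * ∫ s, (s ^ 2)⁻¹ ∂ν := by
      rw [← integral_sub hIg hIf, ← integral_const_mul, ← integral_sub hIpos (hI.const_mul _)]
      congr 1
      funext s
      simp only [div_eq_mul_inv]
      ring
    have hpos : 0 ≤ ∫ s, (g (s • x) - f (s • x)) / s ^ 2 ∂ν :=
      integral_nonneg fun s => div_nonneg (sub_nonneg.2 (hfg _)) (sq_nonneg _)
    have h00 : 0 ≤ g 0 - f 0 := sub_nonneg.2 (hfg 0)
    have hmul : (g 0 - f 0) * ∫ s, (s ^ 2)⁻¹ ∂ν ≤ (g 0 - f 0) * c :=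
      mul_le_mul_of_nonneg_left hc h00
    have hring : (g 0 - f 0) * c = c * g 0 - c * f 0 := by ring
    unfold PsiGL
    linarith
end

section
/- Let n ≥ 1, let c ∈ ℝ, and let ν be a nonnegative finite Borel measure on ℝ with compact support satisfying ν({0}) = 0 and ∫_ℝ |s|⁻¹ dν(s) < ∞. Then Ψ_{ν,c} is dually translation-invariant, i.e. Ψ_{ν,c}(f + ⟨a, ·⟩)(x) = Ψ_{ν,c}(f)(x) for every a ∈ ℝⁿ, every convex f : ℝⁿ → ℝ and every x ∈ ℝⁿ, if and only if ∫_ℝ s⁻¹ dν(s) = 0 (this integral is absolutely convergent since ∫_ℝ |s|⁻¹ dν(s) < ∞). -/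
open MeasureTheory
open scoped RealInnerProductSpace

lemma psi_integrable (n : ℕ) (ν : Measure ℝ) [IsFiniteMeasure ν]
    (hcs : ∃ K : Set ℝ, IsCompact K ∧ ν Kᶜ = 0)
    (hint : Integrable (fun s : ℝ => |s|⁻¹) ν)
    (f : EuclideanSpace ℝ (Fin n) → ℝ) (hf : ConvexOn ℝ Set.univ f)
    (x : EuclideanSpace ℝ (Fin n)) :
    Integrable (fun s : ℝ => (f (s • x) - f 0) / s ^ 2) ν := by
  obtain ⟨K, hK, hKc⟩ := hcs
  obtain ⟨R0, hR0⟩ := hK.isBounded.subset_closedBall 0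
  set R : ℝ := |R0| + 1 with hRdef
  have hR : 0 < R := by positivity
  have hcont : Continuous f := by
    have := hf.continuousOn isOpen_univ
    rwa [← continuousOn_univ]
  set C : ℝ := max (f (R • x)) (f ((-R) • x)) - f 0 with hCdef
  have hC0 : 0 ≤ C := by
    have h := hf.2 (Set.mem_univ (R • x)) (Set.mem_univ ((-R) • x))
      (by norm_num : (0:ℝ) ≤ 1/2) (by norm_num : (0:ℝ) ≤ 1/2) (by norm_num)
    have hz : (1/2 : ℝ) • (R • x) + (1/2 : ℝ) • ((-R) • x) = 0 := by
      rw [smul_smul, smul_smul]; ring_nf; module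
    rw [hz] at h
    simp only [smul_eq_mul] at h
    have := le_max_left (f (R • x)) (f ((-R) • x))
    have := le_max_right (f (R • x)) (f ((-R) • x))
    simp only [hCdef]; linarith
  -- upper bound for 0 ≤ s ≤ R
  have hub : ∀ s : ℝ, |s| ≤ R → f (s • x) - f 0 ≤ |s| / R * C := by
    intro s hs
    rcases le_or_gt 0 s with hpos | hneg
    · have hsR : s / R ≤ 1 := by
        rw [div_le_one hR]; calc s ≤ |s| := le_abs_self s
          _ ≤ R := hs
      have h := hf.2 (Set.mem_univ (R • x)) (Set.mem_univ (0 : EuclideanSpace ℝ (Fin n)))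
        (by positivity : (0:ℝ) ≤ s / R) (by linarith : (0:ℝ) ≤ 1 - s / R) (by ring)
      have hz : (s / R) • (R • x) + (1 - s / R) • (0 : EuclideanSpace ℝ (Fin n)) = s • x := by
        rw [smul_zero, add_zero, smul_smul, div_mul_cancel₀ _ hR.ne']
      rw [hz] at h
      simp only [smul_eq_mul] at h
      have h1 : f (R • x) - f 0 ≤ C := by
        have := le_max_left (f (R • x)) (f ((-R) • x)); simp only [hCdef]; linarith
      have habs : |s| = s := abs_of_nonneg hpos
      have h2 : s / R * (f (R • x) - f 0) ≤ s / R * C :=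
        mul_le_mul_of_nonneg_left h1 (by positivity)
      rw [habs]; nlinarith
    · have hsR : -s / R ≤ 1 := by
        rw [div_le_one hR]; calc -s ≤ |s| := neg_le_abs s
          _ ≤ R := hs
      have h := hf.2 (Set.mem_univ ((-R) • x)) (Set.mem_univ (0 : EuclideanSpace ℝ (Fin n)))
        (div_nonneg (by linarith) hR.le : (0:ℝ) ≤ -s / R) (by linarith : (0:ℝ) ≤ 1 - (-s) / R) (by ring)
      have hz : (-s / R) • ((-R) • x) + (1 - -s / R) • (0 : EuclideanSpace ℝ (Fin n)) = s • x := by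
        rw [smul_zero, add_zero, smul_smul]
        congr 1
        field_simp
      rw [hz] at h
      simp only [smul_eq_mul] at h
      have h1 : f ((-R) • x) - f 0 ≤ C := by
        have := le_max_right (f (R • x)) (f ((-R) • x)); simp only [hCdef]; linarith
      have habs : |s| = -s := abs_of_neg hneg
      have h2 : -s / R * (f ((-R) • x) - f 0) ≤ -s / R * C :=
        mul_le_mul_of_nonneg_left h1 (div_nonneg (by linarith) hR.le)
      rw [habs]; nlinarith
  have hbd : ∀ s : ℝ, |s| ≤ R → |f (s • x) - f 0| ≤ |s| / R * C := by
    intro s hs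
    rw [abs_le]
    constructor
    · have hmid : f 0 ≤ 1/2 * f (s • x) + 1/2 * f ((-s) • x) := by
        have h := hf.2 (Set.mem_univ (s • x)) (Set.mem_univ ((-s) • x))
          (by norm_num : (0:ℝ) ≤ 1/2) (by norm_num : (0:ℝ) ≤ 1/2) (by norm_num)
        have hz : (1/2 : ℝ) • (s • x) + (1/2 : ℝ) • ((-s) • x) = 0 := by
          rw [smul_smul, smul_smul]; module
        rw [hz] at h
        simpa [smul_eq_mul] using h
      have h2 := hub (-s) (by simpa using hs)
      rw [abs_neg] at h2
      linarith
    · exact hub s hs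
  -- measurability
  have hmeas : AEStronglyMeasurable (fun s : ℝ => (f (s • x) - f 0) / s ^ 2) ν := by
    apply AEStronglyMeasurable.mul
    · exact ((hcont.comp (continuous_id.smul continuous_const)).sub
        continuous_const).aestronglyMeasurable
    · exact (Measurable.inv (measurable_id.pow_const 2)).aestronglyMeasurable
  refine Integrable.mono' (hint.const_mul (C / R)) hmeas ?_
  have hKae : ∀ᵐ s ∂ν, s ∈ K := by
    rw [ae_iff]
    exact hKc
  filter_upwards [hKae] with s hsK
  have hsR : |s| ≤ R := by
    have h1 : |s| ≤ R0 := by simpa [Real.dist_eq] using hR0 hsK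
    have h2 : R0 ≤ |R0| := le_abs_self R0
    rw [hRdef]; linarith
  have key := hbd s hsR
  rcases eq_or_ne s 0 with rfl | hs0
  · simp
  · have hs2 : (0:ℝ) < s ^ 2 := by positivity
    rw [Real.norm_eq_abs, abs_div, abs_of_nonneg hs2.le, div_le_iff₀ hs2]
    have hne : |s| ≠ 0 := by simpa using hs0
    have h1 : s ^ 2 = |s| * |s| := by rw [sq, ← abs_mul_abs_self]
    have heq : C / R * |s|⁻¹ * s ^ 2 = |s| / R * C := by
      rw [h1]
      calc C / R * |s|⁻¹ * (|s| * |s|) = C / R * (|s|⁻¹ * |s|) * |s| := by ring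
        _ = |s| / R * C := by rw [inv_mul_cancel₀ hne]; ring
    rw [heq]
    exact key

lemma inv_integrable (ν : Measure ℝ) [IsFiniteMeasure ν]
    (hint : Integrable (fun s : ℝ => |s|⁻¹) ν) :
    Integrable (fun s : ℝ => s⁻¹) ν := by
  refine hint.mono' measurable_inv.aestronglyMeasurable ?_
  filter_upwards with s
  simp [abs_inv]

lemma psi_key (n : ℕ) (ν : Measure ℝ) [IsFiniteMeasure ν] (c : ℝ)
    (hcs : ∃ K : Set ℝ, IsCompact K ∧ ν Kᶜ = 0)
    (hint : Integrable (fun s : ℝ => |s|⁻¹) ν)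
    (f : EuclideanSpace ℝ (Fin n) → ℝ) (hf : ConvexOn ℝ Set.univ f)
    (a x : EuclideanSpace ℝ (Fin n)) :
    PsiGL n ν c (fun y => f y + ⟪a, y⟫) x = PsiGL n ν c f x + ⟪a, x⟫ * ∫ s, s⁻¹ ∂ν := by
  have hg := psi_integrable n ν hcs hint f hf x
  have hinv := inv_integrable ν hint
  unfold PsiGL
  simp only [inner_zero_right, add_zero]
  have hpt : ∀ s : ℝ, ((f (s • x) + ⟪a, s • x⟫) - f 0) / s ^ 2
      = (f (s • x) - f 0) / s ^ 2 + ⟪a, x⟫ * s⁻¹ := by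
    intro s
    rw [real_inner_smul_right]
    rcases eq_or_ne s 0 with rfl | hs
    · simp
    · field_simp
      ring
  have hInt : ∫ s, ((f (s • x) + ⟪a, s • x⟫) - f 0) / s ^ 2 ∂ν
      = ∫ s, ((f (s • x) - f 0) / s ^ 2 + ⟪a, x⟫ * s⁻¹) ∂ν := by
    exact integral_congr_ae (Filter.Eventually.of_forall hpt)
  rw [hInt, integral_add hg (hinv.const_mul _), integral_const_mul]
  ring

theorem stmt3 (n : ℕ) (hn : 1 ≤ n) (c : ℝ) (ν : Measure ℝ) [IsFiniteMeasure ν]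
    (hcs : ∃ K : Set ℝ, IsCompact K ∧ ν Kᶜ = 0)
    (h0 : ν {0} = 0)
    (hint : Integrable (fun s : ℝ => |s|⁻¹) ν) :
    (∀ (a : EuclideanSpace ℝ (Fin n)) (f : EuclideanSpace ℝ (Fin n) → ℝ),
        ConvexOn ℝ Set.univ f →
        ∀ x, PsiGL n ν c (fun y => f y + ⟪a, y⟫) x = PsiGL n ν c f x) ↔
    ∫ s, s⁻¹ ∂ν = 0 := by
  constructor
  · intro H
    set e : EuclideanSpace ℝ (Fin n) := EuclideanSpace.single (⟨0, hn⟩ : Fin n) (1:ℝ) with he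
    have h := H e (fun _ => 0) (convexOn_const 0 convex_univ) e
    rw [psi_key n ν c hcs hint _ (convexOn_const 0 convex_univ) e e] at h
    have hee : ⟪e, e⟫ = 1 := by
      rw [he, real_inner_self_eq_norm_sq, EuclideanSpace.norm_single]
      norm_num
    rw [hee, one_mul] at h
    linarith
  · intro h a f hf x
    rw [psi_key n ν c hcs hint f hf a x, h, mul_zero, add_zero]
end

section
/- Let n ≥ 1, let f and f_j (j ∈ ℕ) belong to Conv(ℝⁿ), suppose (f_j) epi-converges to f, and let A ⊆ ℝⁿ be compact. Then there exist a ∈ ℝⁿ and b ∈ ℝ such that f_j(x) ≥ ⟨a, x⟩ + b and f(x) ≥ ⟨a, x⟩ + b for all x ∈ A and all j ∈ ℕ (inequalities in the extended reals). -/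
open Filter
open scoped RealInnerProductSpace

/-- `f` belongs to `Conv(ℝⁿ)`: extended-real valued, never `−∞`, convex, lower
semicontinuous and proper. -/
def IsConvFn {n : ℕ} (f : EuclideanSpace ℝ (Fin n) → EReal) : Prop :=
  (∀ x, f x ≠ ⊥) ∧ LowerSemicontinuous f ∧ (∃ x, f x ≠ ⊤) ∧
    ∀ x y : EuclideanSpace ℝ (Fin n), ∀ t : ℝ, 0 ≤ t → t ≤ 1 →
      f (t • x + (1 - t) • y) ≤ (t : EReal) * f x + ((1 - t : ℝ) : EReal) * f y

/-- Epi-convergence of a sequence of extended-real valued functions. -/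
def EpiConv {n : ℕ} (fs : ℕ → EuclideanSpace ℝ (Fin n) → EReal)
    (f : EuclideanSpace ℝ (Fin n) → EReal) : Prop :=
  ∀ x : EuclideanSpace ℝ (Fin n),
    (∀ xs : ℕ → EuclideanSpace ℝ (Fin n), Tendsto xs atTop (nhds x) →
      f x ≤ liminf (fun j => fs j (xs j)) atTop) ∧
    (∃ xs : ℕ → EuclideanSpace ℝ (Fin n), Tendsto xs atTop (nhds x) ∧
      Tendsto (fun j => fs j (xs j)) atTop (nhds (f x)))

/-- A lower semicontinuous, nowhere `⊥` extended-real valued function is bounded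
below by a real constant on a compact set. -/
lemma bdd_below_on_compact {n : ℕ} {h : EuclideanSpace ℝ (Fin n) → EReal}
    (hbot : ∀ x, h x ≠ ⊥) (hlsc : LowerSemicontinuous h)
    {A : Set (EuclideanSpace ℝ (Fin n))} (hA : IsCompact A) :
    ∃ b : ℝ, ∀ x ∈ A, (b : EReal) ≤ h x := by
  by_contra hcon
  push_neg at hcon
  have hcon' : ∀ k : ℕ, ∃ x ∈ A, h x < ((-(k : ℝ) : ℝ) : EReal) := fun k => hcon (-(k : ℝ))
  choose x hxA hxlt using hcon'
  obtain ⟨x₀, hx₀A, ψ, hψ, hlim⟩ := hA.tendsto_subseq hxA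
  obtain ⟨c, -, hc⟩ := EReal.exists_between_coe_real (Ne.bot_lt (hbot x₀))
  have hev : ∀ᶠ k in atTop, (c : EReal) < h (x (ψ k)) :=
    hlim.eventually (hlsc x₀ c hc)
  have hev2 : ∀ᶠ k : ℕ in atTop, (-(k : ℝ)) ≤ c := by
    filter_upwards [eventually_ge_atTop (⌈-c⌉₊)] with k hk
    have : (-c : ℝ) ≤ k := le_trans (Nat.le_ceil _) (by exact_mod_cast hk)
    linarith
  obtain ⟨k, hk1, hk2⟩ := (hev.and hev2).exists
  have h1 : h (x (ψ k)) < ((-(ψ k : ℝ) : ℝ) : EReal) := hxlt (ψ k)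
  have h2 : ((-(ψ k : ℝ) : ℝ) : EReal) ≤ ((-(k : ℝ) : ℝ) : EReal) := by
    apply EReal.coe_le_coe_iff.2
    have : (k : ℝ) ≤ (ψ k : ℝ) := by exact_mod_cast hψ.le_apply
    linarith
  have h3 : ((-(k : ℝ) : ℝ) : EReal) ≤ (c : EReal) := EReal.coe_le_coe_iff.2 hk2
  exact absurd (lt_of_lt_of_le h1 (le_trans h2 h3)) (not_lt.2 hk1.le)

theorem stmt6 (n : ℕ) (hn : 1 ≤ n)
    (f : EuclideanSpace ℝ (Fin n) → EReal) (fs : ℕ → EuclideanSpace ℝ (Fin n) → EReal)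
    (hf : IsConvFn f) (hfs : ∀ j, IsConvFn (fs j)) (hepi : EpiConv fs f)
    (A : Set (EuclideanSpace ℝ (Fin n))) (hA : IsCompact A) :
    ∃ (a : EuclideanSpace ℝ (Fin n)) (b : ℝ),
      (∀ j, ∀ x ∈ A, ((⟪a, x⟫ + b : ℝ) : EReal) ≤ fs j x) ∧
      (∀ x ∈ A, ((⟪a, x⟫ + b : ℝ) : EReal) ≤ f x) := by
  classical
  obtain ⟨b0, hb0⟩ := bdd_below_on_compact hf.1 hf.2.1 hA
  have hbj : ∀ j, ∃ b : ℝ, ∀ x ∈ A, (b : EReal) ≤ fs j x :=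
    fun j => bdd_below_on_compact (hfs j).1 (hfs j).2.1 hA
  choose bj hbjspec using hbj
  -- A uniform (in `j`) real lower bound for all `fs j` on `A`.
  have huni : ∃ b : ℝ, ∀ j, ∀ x ∈ A, (b : EReal) ≤ fs j x := by
    by_contra hcon
    push_neg at hcon
    -- For each level `k`, arbitrarily large `j` violate the bound `-k`.
    have hfreq : ∀ k : ℕ, ∃ᶠ j in atTop, ∃ x ∈ A, fs j x < ((-(k : ℝ) : ℝ) : EReal) := by
      intro k
      rw [Filter.frequently_atTop]
      intro N
      obtain ⟨c, hc1, hc2⟩ : ∃ c : ℝ, c ≤ -(k : ℝ) ∧ ∀ j < N, c < bj j := by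
        refine ⟨min (-(k : ℝ)) ((Finset.range (N + 1)).inf' (by simp) bj - 1),
          min_le_left _ _, fun j hj => ?_⟩
        have hmem : j ∈ Finset.range (N + 1) := Finset.mem_range.2 (by omega)
        have := Finset.inf'_le bj hmem
        calc min (-(k : ℝ)) ((Finset.range (N + 1)).inf' (by simp) bj - 1)
            ≤ (Finset.range (N + 1)).inf' (by simp) bj - 1 := min_le_right _ _
          _ < (Finset.range (N + 1)).inf' (by simp) bj := by linarith
          _ ≤ bj j := this
      obtain ⟨j, x, hxA, hx⟩ := hcon c
      refine ⟨j, ?_, x, hxA, lt_of_lt_of_le hx (EReal.coe_le_coe_iff.2 hc1)⟩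
      by_contra hjN
      push_neg at hjN
      exact absurd (hbjspec j x hxA)
        (not_le.2 (lt_of_lt_of_le hx (EReal.coe_le_coe_iff.2 (hc2 j hjN).le)))
    obtain ⟨φ, hφ, hP⟩ := Filter.extraction_forall_of_frequently hfreq
    choose x hxA hxlt using hP
    obtain ⟨x₀, hx₀A, ψ, hψ, hlim⟩ := hA.tendsto_subseq hxA
    set σ : ℕ → ℕ := φ ∘ ψ with hσdef
    have hσ : StrictMono σ := hφ.comp hψ
    -- Fill in the gaps of the subsequence with the limit point `x₀`.
    set ys : ℕ → EuclideanSpace ℝ (Fin n) := fun j =>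
      if h : ∃ k, σ k = j then x (ψ h.choose) else x₀ with hysdef
    have hys_at : ∀ k, ys (σ k) = x (ψ k) := by
      intro k
      have hex : ∃ k', σ k' = σ k := ⟨k, rfl⟩
      have : hex.choose = k := hσ.injective hex.choose_spec
      simp only [hysdef, dif_pos hex, this]
    have hys_tendsto : Tendsto ys atTop (nhds x₀) := by
      rw [tendsto_def]
      intro U hU
      have hmem : ∀ᶠ k in atTop, x (ψ k) ∈ U := hlim hU
      obtain ⟨K, hK⟩ := eventually_atTop.1 hmem
      rw [mem_atTop_sets]
      refine ⟨σ K, fun j hj => ?_⟩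
      simp only [Set.mem_preimage, hysdef]
      by_cases hex : ∃ k, σ k = j
      · rw [dif_pos hex]
        apply hK
        have : σ K ≤ σ hex.choose := by rw [hex.choose_spec]; exact hj
        exact hσ.le_iff_le.1 this
      · rw [dif_neg hex]
        exact mem_of_mem_nhds hU
    have h1 := (hepi x₀).1 ys hys_tendsto
    -- The liminf along the full sequence is `⊥`.
    have h2 : liminf (fun j => fs j (ys j)) atTop ≤ ⊥ := by
      have hmaple : map σ atTop ≤ atTop := hσ.tendsto_atTop
      have hsub : liminf (fun j => fs j (ys j)) atTop ≤
          liminf ((fun j => fs j (ys j)) ∘ σ) atTop := by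
        rw [liminf_comp]
        exact liminf_le_liminf_of_le hmaple
      refine le_trans hsub ?_
      rw [le_bot_iff, EReal.eq_bot_iff_forall_lt]
      intro y
      have hfreq' : ∃ᶠ k in atTop, ((fun j => fs j (ys j)) ∘ σ) k ≤ ((y - 1 : ℝ) : EReal) := by
        apply Eventually.frequently
        filter_upwards [eventually_ge_atTop (⌈-(y - 1)⌉₊)] with k hk
        have hkval : fs (σ k) (x (ψ k)) < ((-(ψ k : ℝ) : ℝ) : EReal) := hxlt (ψ k)
        have hle1 : ((-(ψ k : ℝ) : ℝ) : EReal) ≤ ((-(k : ℝ) : ℝ) : EReal) := by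
          apply EReal.coe_le_coe_iff.2
          have : (k : ℝ) ≤ (ψ k : ℝ) := by exact_mod_cast hψ.le_apply
          linarith
        have hle2 : ((-(k : ℝ) : ℝ) : EReal) ≤ ((y - 1 : ℝ) : EReal) := by
          apply EReal.coe_le_coe_iff.2
          have : (-(y - 1) : ℝ) ≤ k := le_trans (Nat.le_ceil _) (by exact_mod_cast hk)
          linarith
        calc ((fun j => fs j (ys j)) ∘ σ) k = fs (σ k) (x (ψ k)) := by
              simp only [Function.comp_apply, hys_at]
          _ ≤ ((y - 1 : ℝ) : EReal) := le_trans hkval.le (le_trans hle1 hle2)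
      calc liminf ((fun j => fs j (ys j)) ∘ σ) atTop ≤ ((y - 1 : ℝ) : EReal) :=
            liminf_le_of_frequently_le hfreq'
        _ < (y : EReal) := EReal.coe_lt_coe_iff.2 (by linarith)
    exact hf.1 x₀ (le_bot_iff.1 (le_trans h1 h2))
  obtain ⟨b1, hb1⟩ := huni
  refine ⟨0, min b0 b1, fun j x hx => ?_, fun x hx => ?_⟩
  · have : ((min b0 b1 : ℝ) : EReal) ≤ fs j x :=
      le_trans (EReal.coe_le_coe_iff.2 (min_le_right _ _)) (hb1 j x hx)
    simpa using this
  · have : ((min b0 b1 : ℝ) : EReal) ≤ f x :=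
      le_trans (EReal.coe_le_coe_iff.2 (min_le_left _ _)) (hb0 x hx)
    simpa using this
end

section
/- Let n ≥ 1 and let Ψ be a map sending each convex function f : ℝⁿ → ℝ to a convex function Ψ(f) : ℝⁿ → ℝ, which is additive. Then Ψ maps affine functions to affine functions: for every g : ℝⁿ → ℝ of the form g(x) = ⟨a, x⟩ + b with a ∈ ℝⁿ, b ∈ ℝ, the function Ψ(g) is affine. -/
open scoped RealInnerProductSpace

lemma aff_convexOn {n : ℕ} (a : EuclideanSpace ℝ (Fin n)) (b : ℝ) :
    ConvexOn ℝ Set.univ (fun y : EuclideanSpace ℝ (Fin n) => ⟪a, y⟫ + b) := by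
  refine ⟨convex_univ, fun x _ y _ s t hs ht hst => le_of_eq ?_⟩
  simp only [inner_add_right, real_inner_smul_right, smul_eq_mul]
  linear_combination (-b) * hst

lemma cc_affine {n : ℕ} (F : EuclideanSpace ℝ (Fin n) → ℝ)
    (hcv : ConvexOn ℝ Set.univ F) (hcc : ConcaveOn ℝ Set.univ F) :
    ∃ (a' : EuclideanSpace ℝ (Fin n)) (b' : ℝ), ∀ x, F x = ⟪a', x⟫ + b' := by
  have hseg : ∀ (x y : EuclideanSpace ℝ (Fin n)) (s t : ℝ), 0 ≤ s → 0 ≤ t → s + t = 1 →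
      F (s • x + t • y) = s * F x + t * F y := by
    intro x y s t hs ht hst
    have h1 := hcv.2 (Set.mem_univ x) (Set.mem_univ y) hs ht hst
    have h2 := hcc.2 (Set.mem_univ x) (Set.mem_univ y) hs ht hst
    simp only [smul_eq_mul] at h1 h2
    linarith
  set h : EuclideanSpace ℝ (Fin n) → ℝ := fun x => F x - F 0 with hh
  have hsmul01 : ∀ (x : EuclideanSpace ℝ (Fin n)) (c : ℝ), 0 ≤ c → c ≤ 1 →
      h (c • x) = c * h x := by
    intro x c hc hc1
    have := hseg x 0 c (1 - c) hc (by linarith) (by ring)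
    simp only [smul_zero, add_zero] at this
    simp only [hh, this]; ring
  have haddh : ∀ x y : EuclideanSpace ℝ (Fin n), h (x + y) = h x + h y := by
    intro x y
    have h1 := hseg x y (1/2) (1/2) (by norm_num) (by norm_num) (by norm_num)
    have h2 := hsmul01 (x + y) (1/2) (by norm_num) (by norm_num)
    have h3 : (1/2 : ℝ) • (x + y) = (1/2 : ℝ) • x + (1/2 : ℝ) • y := smul_add _ _ _
    rw [h3] at h2
    simp only [hh, h1] at h2 ⊢
    linarith
  have h0 : h 0 = 0 := by simp [hh]
  have hneg : ∀ x : EuclideanSpace ℝ (Fin n), h (-x) = - h x := by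
    intro x
    have := haddh x (-x)
    simp only [add_neg_cancel, h0] at this
    linarith
  have hsmul : ∀ (c : ℝ) (x : EuclideanSpace ℝ (Fin n)), h (c • x) = c * h x := by
    have hpos : ∀ (c : ℝ) (x : EuclideanSpace ℝ (Fin n)), 0 ≤ c → h (c • x) = c * h x := by
      intro c x hc
      rcases le_or_gt c 1 with hc1 | hc1
      · exact hsmul01 x c hc hc1
      · have hc0 : 0 < c := lt_of_lt_of_le one_pos hc1.le
        have := hsmul01 (c • x) (1/c) (by positivity) (by
          rw [div_le_one hc0]; linarith)
        rw [smul_smul, one_div_mul_cancel hc0.ne', one_smul] at this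
        field_simp at this ⊢
        linarith
    intro c x
    rcases le_or_gt 0 c with hc | hc
    · exact hpos c x hc
    · have : h (c • x) = h (-((-c) • x)) := by
        congr 1; simp
      rw [this, hneg, hpos (-c) x (by linarith)]
      ring
  let L : EuclideanSpace ℝ (Fin n) →ₗ[ℝ] ℝ :=
    { toFun := h, map_add' := haddh, map_smul' := fun c x => hsmul c x }
  let a' : EuclideanSpace ℝ (Fin n) :=
    (InnerProductSpace.toDual ℝ (EuclideanSpace ℝ (Fin n))).symm L.toContinuousLinearMap
  refine ⟨a', F 0, fun x => ?_⟩
  have h1 : ⟪a', x⟫ = L x := InnerProductSpace.toDual_symm_apply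
  rw [h1]
  simp only [LinearMap.coe_mk, AddHom.coe_mk, L, hh]
  ring

theorem stmt7 (n : ℕ) (hn : 1 ≤ n)
    (Ψ : (EuclideanSpace ℝ (Fin n) → ℝ) → (EuclideanSpace ℝ (Fin n) → ℝ))
    (hmap : ∀ f, ConvexOn ℝ Set.univ f → ConvexOn ℝ Set.univ (Ψ f))
    (hadd : ∀ f g : EuclideanSpace ℝ (Fin n) → ℝ, ConvexOn ℝ Set.univ f →
      ConvexOn ℝ Set.univ g → ∀ x, Ψ (fun y => f y + g y) x = Ψ f x + Ψ g x)
    (a : EuclideanSpace ℝ (Fin n)) (b : ℝ) :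
    ∃ (a' : EuclideanSpace ℝ (Fin n)) (b' : ℝ),
      ∀ x, Ψ (fun y => ⟪a, y⟫ + b) x = ⟪a', x⟫ + b' := by
  set g : EuclideanSpace ℝ (Fin n) → ℝ := fun y => ⟪a, y⟫ + b with hg
  set g' : EuclideanSpace ℝ (Fin n) → ℝ := fun y => ⟪-a, y⟫ + (-b) with hg'
  have hgc : ConvexOn ℝ Set.univ g := aff_convexOn a b
  have hg'c : ConvexOn ℝ Set.univ g' := aff_convexOn (-a) (-b)
  set z : EuclideanSpace ℝ (Fin n) → ℝ := fun _ => 0 with hz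
  have hzc : ConvexOn ℝ Set.univ z := convexOn_const 0 convex_univ
  have hz0 : ∀ x, Ψ z x = 0 := by
    intro x
    have := hadd z z hzc hzc x
    have hzz : (fun y => z y + z y) = z := by funext y; simp [hz]
    rw [hzz] at this
    linarith
  have hsum : (fun y => g y + g' y) = z := by
    funext y
    simp only [hg, hg', hz, inner_neg_left]
    ring
  have key : ∀ x, Ψ g x + Ψ g' x = 0 := by
    intro x
    have := hadd g g' hgc hg'c x
    rw [hsum] at this
    rw [← this, hz0]
  have hconc : ConcaveOn ℝ Set.univ (Ψ g) := by
    have heq : Ψ g = fun x => - Ψ g' x := by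
      funext x; have := key x; linarith
    rw [heq]
    exact (hmap g' hg'c).neg
  exact cc_affine (Ψ g) (hmap g hgc) hconc
end

section
/- Let n ≥ 1 and let (μ_x)_{x ∈ ℝⁿ} be a family of nonnegative finite Borel measures on ℝⁿ, each with compact support, such that for every convex function f : ℝⁿ → ℝ the function x ↦ ∫_{ℝⁿ} f dμ_x is a convex real-valued function on ℝⁿ. Then the total mass x ↦ μ_x(ℝⁿ) is constant in x; moreover, if this constant equals 0 then μ_x is the zero measure for every x ∈ ℝⁿ. -/
open MeasureTheory

theorem stmt8 (n : ℕ) (hn : 1 ≤ n)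
    (μ : EuclideanSpace ℝ (Fin n) → Measure (EuclideanSpace ℝ (Fin n)))
    (hfin : ∀ x, IsFiniteMeasure (μ x))
    (hcs : ∀ x, ∃ K : Set (EuclideanSpace ℝ (Fin n)), IsCompact K ∧ μ x Kᶜ = 0)
    (hconv : ∀ f : EuclideanSpace ℝ (Fin n) → ℝ, ConvexOn ℝ Set.univ f →
      ConvexOn ℝ Set.univ (fun x => ∫ y, f y ∂(μ x))) :
    (∀ x, μ x Set.univ = μ 0 Set.univ) ∧
    (μ 0 Set.univ = 0 → ∀ x, μ x = 0) := by
  set g : EuclideanSpace ℝ (Fin n) → ℝ := fun x => (μ x Set.univ).toReal with hgdef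
  have hg1 : ConvexOn ℝ Set.univ g := by
    have := hconv (fun _ => (1:ℝ)) (convexOn_const _ convex_univ)
    simp [integral_const] at this; exact this
  have hg2 : ConvexOn ℝ Set.univ (fun x => -g x) := by
    have := hconv (fun _ => (-1:ℝ)) (convexOn_const _ convex_univ)
    simp [integral_const] at this; exact this
  have hnn : ∀ x, 0 ≤ g x := fun x => ENNReal.toReal_nonneg
  have hge : ∀ x, g 0 ≤ g x := by
    intro x
    by_contra h
    push_neg at h
    set d : ℝ := g 0 - g x with hd
    have hdpos : 0 < d := by simp only [hd]; linarith
    set t : ℝ := (g 0 + 1) / d with ht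
    have ht1 : 1 < t := by
      rw [ht, lt_div_iff₀ hdpos]
      have := hnn x
      simp only [hd]
      linarith
    have htpos : 0 < t := by linarith
    have ha : (0:ℝ) ≤ 1/t := by positivity
    have hb : (0:ℝ) ≤ 1 - 1/t := by
      have h1t : 1/t ≤ 1 := by rw [div_le_one htpos]; linarith
      linarith
    have hab : (1/t) + (1 - 1/t) = (1:ℝ) := by ring
    have key := hg2.2 (Set.mem_univ (t • x)) (Set.mem_univ (0 : EuclideanSpace ℝ (Fin n)))
      ha hb hab
    rw [smul_zero, add_zero, smul_smul, one_div_mul_cancel (ne_of_gt htpos), one_smul] at key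
    simp only [smul_eq_mul] at key
    have hti : t * (1/t) = 1 := mul_one_div_cancel (ne_of_gt htpos)
    have htd : t * d = g 0 + 1 := by rw [ht]; field_simp
    have h2 : 0 ≤ g (t • x) := hnn _
    -- key : -g x ≤ (1/t) * -g (t•x) + (1 - 1/t) * -g 0 ; multiply by t
    have key2 : t * -g x ≤ t * ((1/t) * -g (t • x) + (1 - 1/t) * -g 0) :=
      mul_le_mul_of_nonneg_left key (le_of_lt htpos)
    have expand : t * (1/t * -g (t • x) + (1 - 1/t) * -g 0)
        = -((t * (1/t)) * g (t • x)) - t * g 0 + (t * (1/t)) * g 0 := by ring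
    rw [expand, hti, one_mul, one_mul] at key2
    -- key2 : t * -g x ≤ -g (t•x) - t * g 0 + g 0
    have hexp : t * d = t * g 0 - t * g x := by rw [hd]; ring
    linarith [key2, htd, hexp, h2]
  have heq : ∀ x, g x = g 0 := by
    intro x
    have hzero : (1/2 : ℝ) • x + (1/2 : ℝ) • (-x) = 0 := by
      rw [smul_neg]; abel
    have hhalf : (0:ℝ) ≤ 1/2 := by norm_num
    have hsum : (1/2 : ℝ) + 1/2 = 1 := by norm_num
    have h1 := hg1.2 (Set.mem_univ x) (Set.mem_univ (-x)) hhalf hhalf hsum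
    have h2 := hg2.2 (Set.mem_univ x) (Set.mem_univ (-x)) hhalf hhalf hsum
    rw [hzero] at h1 h2
    simp only [smul_eq_mul] at h1 h2
    have := hge x
    have := hge (-x)
    linarith
  constructor
  · intro x
    haveI := hfin x; haveI := hfin 0
    exact (ENNReal.toReal_eq_toReal_iff' (measure_ne_top _ _) (measure_ne_top _ _)).mp (heq x)
  · intro h0 x
    haveI := hfin x
    have hx : g x = 0 := by
      rw [heq x, hgdef]; simp [h0]
    have hxu : μ x Set.univ = 0 := by
      have := (ENNReal.toReal_eq_zero_iff _).mp hx
      rcases this with h | h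
      · exact h
      · exact absurd h (measure_ne_top _ _)
    exact Measure.measure_univ_eq_zero.mp hxu
end

section
/- Let φ : ℝ → ℝ be convex, even (φ(−t) = φ(t) for all t) and nonnegative, and let f : ℝ → ℝ be convex. Then the function t ↦ ∫_{−φ(t)}^{φ(t)} (f(s) − f(0)) ds is a convex function of t on ℝ. -/
open MeasureTheory

theorem stmt10 (φ : ℝ → ℝ) (hφ : ConvexOn ℝ Set.univ φ)
    (heven : ∀ t, φ (-t) = φ t) (hnonneg : ∀ t, 0 ≤ φ t)
    (f : ℝ → ℝ) (hf : ConvexOn ℝ Set.univ f) :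
    ConvexOn ℝ Set.univ (fun t => ∫ s in (-(φ t))..(φ t), (f s - f 0)) := by
  have hfc : Continuous f :=
    continuousOn_univ.mp (hf.continuousOn isOpen_univ)
  set g : ℝ → ℝ := fun s => f s - f 0 with hgdef
  have hgc : Continuous g := hfc.sub continuous_const
  set h : ℝ → ℝ := fun s => g s + g (-s) with hhdef
  have hhc : Continuous h := hgc.add (hgc.comp continuous_neg)
  -- h is nonnegative
  have hh_nonneg : ∀ s, 0 ≤ h s := by
    intro s
    have h0 : (0 : ℝ) = (1/2 : ℝ) • s + (1/2 : ℝ) • (-s) := by rw [smul_eq_mul, smul_eq_mul]; ring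
    have := hf.2 (Set.mem_univ s) (Set.mem_univ (-s)) (by norm_num) (by norm_num)
      (by norm_num : (1/2 : ℝ) + 1/2 = 1)
    rw [← h0] at this
    simp only [smul_eq_mul] at this
    simp only [hhdef, hgdef]
    linarith
  -- h is convex
  have hh_conv : ConvexOn ℝ Set.univ h := by
    have h1 : ConvexOn ℝ Set.univ g := by
      have : g = fun s => f s + (-(f 0)) := by funext s; simp [hgdef]; ring
      rw [this]
      exact hf.add (convexOn_const _ convex_univ)
    have h2 : ConvexOn ℝ Set.univ (fun s : ℝ => g (-s)) := by
      have := h1.comp_linearMap (-(LinearMap.id : ℝ →ₗ[ℝ] ℝ))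
      exact this
    exact h1.add h2
  -- h is even
  have hh_even : ∀ s, h (-s) = h s := by
    intro s; simp only [hhdef, neg_neg]; ring
  -- h is monotone on Ici 0
  have hh_mono : MonotoneOn h (Set.Ici 0) := by
    intro x hx y hy hxy
    simp only [Set.mem_Ici] at hx hy
    rcases eq_or_lt_of_le hy with hy0 | hy0
    · have hx0 : x = 0 := le_antisymm (hxy.trans hy0.symm.le) hx
      rw [hx0, ← hy0]
    · set a : ℝ := (y - x) / (2 * y) with hadef
      set b : ℝ := (y + x) / (2 * y) with hbdef
      have ha : 0 ≤ a := div_nonneg (by linarith) (by linarith)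
      have hb : 0 ≤ b := div_nonneg (by linarith) (by linarith)
      have hab : a + b = 1 := by
        rw [hadef, hbdef, ← add_div, div_eq_one_iff_eq (ne_of_gt (by linarith))]
        ring
      have hxab : x = a • (-y) + b • y := by
        simp only [smul_eq_mul, hadef, hbdef]
        field_simp
        ring
      have := hh_conv.2 (Set.mem_univ (-y)) (Set.mem_univ y) ha hb hab
      rw [← hxab] at this
      simp only [smul_eq_mul, hh_even] at this
      calc h x ≤ a * h y + b * h y := this
        _ = h y := by rw [← add_mul, hab, one_mul]
  -- the primitive G
  set G : ℝ → ℝ := fun x => ∫ s in (0:ℝ)..x, h s with hGdef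
  have hGderiv : ∀ x : ℝ, HasDerivAt G (h x) x := by
    intro x
    exact intervalIntegral.integral_hasDerivAt_right
      (hhc.intervalIntegrable _ _)
      (hhc.stronglyMeasurableAtFilter _ _)
      hhc.continuousAt
  -- G is convex on Ici 0
  have hGconv : ConvexOn ℝ (Set.Ici (0:ℝ)) G := by
    refine MonotoneOn.convexOn_of_deriv (convex_Ici 0) ?_ ?_ ?_
    · exact fun x _ => ((hGderiv x).continuousAt).continuousWithinAt
    · exact fun x _ => ((hGderiv x).differentiableAt).differentiableWithinAt
    · rw [interior_Ici]
      intro x hx y hy hxy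
      rw [(hGderiv x).deriv, (hGderiv y).deriv]
      exact hh_mono (Set.mem_Ici.mpr (le_of_lt (Set.mem_Ioi.mp hx))) (Set.mem_Ici.mpr (le_of_lt (Set.mem_Ioi.mp hy))) hxy
  -- G is monotone on Ici 0
  have hGmono : MonotoneOn G (Set.Ici (0:ℝ)) := by
    intro x hx y hy hxy
    have hGy : G y = G x + ∫ s in x..y, h s :=
      (intervalIntegral.integral_add_adjacent_intervals
        (hhc.intervalIntegrable 0 x) (hhc.intervalIntegrable x y)).symm
    have : 0 ≤ ∫ s in x..y, h s :=
      intervalIntegral.integral_nonneg hxy (fun u _ => hh_nonneg u)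
    linarith
  -- rewrite the target function
  have key : ∀ x : ℝ, 0 ≤ x → (∫ s in (-x)..x, g s) = G x := by
    intro x hx
    have h1 : (∫ s in (-x)..x, g s) = (∫ s in (-x)..(0:ℝ), g s) + ∫ s in (0:ℝ)..x, g s :=
      (intervalIntegral.integral_add_adjacent_intervals
        (hgc.intervalIntegrable _ _) (hgc.intervalIntegrable _ _)).symm
    have h2 : (∫ s in (0:ℝ)..x, g (-s)) = ∫ s in (-x)..(0:ℝ), g s := by
      rw [intervalIntegral.integral_comp_neg (fun s => g s)]
      norm_num
    have h3 : G x = (∫ s in (0:ℝ)..x, g s) + ∫ s in (0:ℝ)..x, g (-s) := by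
      rw [hGdef]
      exact intervalIntegral.integral_add (hgc.intervalIntegrable _ _)
        ((hgc.comp continuous_neg).intervalIntegrable _ _)
    rw [h1, h3, h2]
    ring
  have heq : (fun t => ∫ s in (-(φ t))..(φ t), (f s - f 0)) = fun t => G (φ t) :=
    funext fun t => key (φ t) (hnonneg t)
  rw [heq]
  refine ⟨convex_univ, fun x _ y _ a b ha hb hab => ?_⟩
  have h1 : φ (a • x + b • y) ≤ a • φ x + b • φ y :=
    hφ.2 (Set.mem_univ x) (Set.mem_univ y) ha hb hab
  have h2 : G (φ (a • x + b • y)) ≤ G (a • φ x + b • φ y) := by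
    refine hGmono (hnonneg _) ?_ h1
    have := add_nonneg (smul_nonneg ha (hnonneg x)) (smul_nonneg hb (hnonneg y))
    exact this
  exact h2.trans (hGconv.2 (hnonneg x) (hnonneg y) ha hb hab)
end

section
/- Let n ≥ 2 and let μ be an SO(n−1)-invariant nonnegative finite Borel measure on ℝⁿ with compact support. If convex functions f_j : ℝⁿ → ℝ converge to a convex function f : ℝⁿ → ℝ uniformly on every compact subset of ℝⁿ, then Ψ_μ(f_j)(x) → Ψ_μ(f)(x) for every x ∈ ℝⁿ. -/
open MeasureTheory
open scoped Classical

/-- `ρ` belongs to `SO(n)`: a linear isometry of `ℝⁿ` with determinant `1`. -/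
noncomputable def InSO {n : ℕ}
    (ρ : EuclideanSpace ℝ (Fin n) ≃ₗᵢ[ℝ] EuclideanSpace ℝ (Fin n)) : Prop :=
  LinearMap.det (ρ.toLinearEquiv : EuclideanSpace ℝ (Fin n) →ₗ[ℝ] EuclideanSpace ℝ (Fin n)) = 1

/-- A measure `μ` on `ℝⁿ` is `SO(n−1)`-invariant (w.r.t. the pole `e`) if every rotation
fixing `e` pushes `μ` forward to itself. -/
def SOInvariant {n : ℕ} (e : EuclideanSpace ℝ (Fin n))
    (μ : Measure (EuclideanSpace ℝ (Fin n))) : Prop :=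
  ∀ ρ : EuclideanSpace ℝ (Fin n) ≃ₗᵢ[ℝ] EuclideanSpace ℝ (Fin n),
    InSO ρ → ρ e = e → Measure.map (⇑ρ) μ = μ

/-- The endomorphism `Ψ_μ`, defined using a choice `ϑ x` of rotation mapping the pole to
`x/‖x‖` for each `x ≠ 0`. -/
noncomputable def PsiMu {n : ℕ} (μ : Measure (EuclideanSpace ℝ (Fin n)))
    (ϑ : EuclideanSpace ℝ (Fin n) →
      (EuclideanSpace ℝ (Fin n) ≃ₗᵢ[ℝ] EuclideanSpace ℝ (Fin n)))
    (f : EuclideanSpace ℝ (Fin n) → ℝ) (x : EuclideanSpace ℝ (Fin n)) : ℝ :=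
  if x = 0 then f 0 * (μ Set.univ).toReal else ∫ y, f (‖x‖ • ϑ x y) ∂μ

theorem stmt12 (n : ℕ) (hn : 2 ≤ n)
    (e : EuclideanSpace ℝ (Fin n)) (he : ‖e‖ = 1)
    (μ : Measure (EuclideanSpace ℝ (Fin n))) [IsFiniteMeasure μ]
    (hcs : ∃ K : Set (EuclideanSpace ℝ (Fin n)), IsCompact K ∧ μ Kᶜ = 0)
    (hinv : SOInvariant e μ)
    (ϑ : EuclideanSpace ℝ (Fin n) →
      (EuclideanSpace ℝ (Fin n) ≃ₗᵢ[ℝ] EuclideanSpace ℝ (Fin n)))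
    (hϑ : ∀ x, x ≠ 0 → InSO (ϑ x) ∧ ϑ x e = ‖x‖⁻¹ • x)
    (fs : ℕ → EuclideanSpace ℝ (Fin n) → ℝ) (f : EuclideanSpace ℝ (Fin n) → ℝ)
    (hfs : ∀ j, ConvexOn ℝ Set.univ (fs j)) (hf : ConvexOn ℝ Set.univ f)
    (hunif : ∀ K : Set (EuclideanSpace ℝ (Fin n)), IsCompact K →
      TendstoUniformlyOn fs f Filter.atTop K) :
    ∀ x, Filter.Tendsto (fun j => PsiMu μ ϑ (fs j) x) Filter.atTop
      (nhds (PsiMu μ ϑ f x)) := by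
  intro x
  by_cases hx : x = 0
  · subst hx
    simp only [PsiMu, if_pos rfl]
    exact ((hunif {0} isCompact_singleton).tendsto_at (Set.mem_singleton 0)).mul_const _
  · simp only [PsiMu, if_neg hx]
    obtain ⟨K, hK, hKc⟩ := hcs
    set g : EuclideanSpace ℝ (Fin n) → EuclideanSpace ℝ (Fin n) :=
      fun y => ‖x‖ • ϑ x y with hg
    have hgc : Continuous g := (ϑ x).continuous.const_smul ‖x‖
    have hK' : IsCompact (g '' K) := hK.image hgc
    have hae : ∀ᵐ y ∂μ, y ∈ K := by
      rw [MeasureTheory.ae_iff]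
      exact hKc
    have hcont : ∀ (h : EuclideanSpace ℝ (Fin n) → ℝ),
        ConvexOn ℝ Set.univ h → Continuous h := fun h hh =>
      continuousOn_univ.1 (hh.continuousOn isOpen_univ)
    have hint : ∀ (h : EuclideanSpace ℝ (Fin n) → ℝ), Continuous h →
        Integrable (fun y => h (g y)) μ := by
      intro h hc
      obtain ⟨C, hC⟩ := hK'.exists_bound_of_continuousOn hc.continuousOn
      refine ⟨(hc.comp hgc).aestronglyMeasurable, HasFiniteIntegral.of_bounded (C := C) ?_⟩
      filter_upwards [hae] with y hy
      exact hC _ ⟨y, hy, rfl⟩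
    have hintf : Integrable (fun y => f (g y)) μ := hint f (hcont f hf)
    have hintfs : ∀ j, Integrable (fun y => fs j (g y)) μ := fun j =>
      hint (fs j) (hcont (fs j) (hfs j))
    rw [Metric.tendsto_atTop]
    intro ε hε
    set M := (μ Set.univ).toReal with hM
    have hM0 : 0 ≤ M := ENNReal.toReal_nonneg
    have hε' : 0 < ε / (2 * (M + 1)) := by positivity
    obtain ⟨N, hN⟩ := Filter.eventually_atTop.1
      ((Metric.tendstoUniformlyOn_iff.1 (hunif (g '' K) hK')) _ hε')
    refine ⟨N, fun j hj => ?_⟩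
    have hdist : dist (∫ y, fs j (g y) ∂μ) (∫ y, f (g y) ∂μ)
        = ‖∫ y, (fs j (g y) - f (g y)) ∂μ‖ := by
      rw [integral_sub (hintfs j) hintf, dist_eq_norm]
    rw [hdist]
    have hbound : ‖∫ y, (fs j (g y) - f (g y)) ∂μ‖ ≤ ε / (2 * (M + 1)) * M := by
      refine norm_integral_le_of_norm_le_const ?_
      filter_upwards [hae] with y hy
      have := hN j hj _ ⟨y, hy, rfl⟩
      rw [dist_eq_norm] at this
      rw [Real.norm_eq_abs, abs_sub_comm]
      exact le_of_lt this
    calc ‖∫ y, (fs j (g y) - f (g y)) ∂μ‖ ≤ ε / (2 * (M + 1)) * M := hbound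
      _ < ε := by
        rw [div_mul_eq_mul_div, div_lt_iff₀ (by positivity)]
        nlinarith
end

section
/- Let n ≥ 2 and let μ be an SO(n−1)-invariant nonnegative finite Borel measure on ℝⁿ with compact support. Then Ψ_μ is dually translation-invariant, i.e. Ψ_μ(f + ⟨a, ·⟩)(x) = Ψ_μ(f)(x) for every a ∈ ℝⁿ, every convex f : ℝⁿ → ℝ and every x ∈ ℝⁿ, if and only if ∫_{ℝⁿ} y dμ(y) = 0 (the vector-valued Bochner integral of the identity with respect to μ vanishes). -/
open MeasureTheory
open scoped Classical

open scoped RealInnerProductSpace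

lemma integrable_of_cs {n : ℕ} {μ : Measure (EuclideanSpace ℝ (Fin n))} [IsFiniteMeasure μ]
    (hcs : ∃ K : Set (EuclideanSpace ℝ (Fin n)), IsCompact K ∧ μ Kᶜ = 0)
    {E : Type*} [NormedAddCommGroup E]
    (g : EuclideanSpace ℝ (Fin n) → E) (hg : Continuous g) : Integrable g μ := by
  obtain ⟨K, hK, hKc⟩ := hcs
  obtain ⟨C, hC⟩ := hK.exists_bound_of_continuousOn hg.continuousOn
  have hae : ∀ᵐ y ∂μ, y ∈ K := by
    rw [MeasureTheory.ae_iff]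
    exact hKc
  exact (integrable_const C).mono' hg.aestronglyMeasurable
    (hae.mono fun y hy => hC y hy)

theorem stmt13 (n : ℕ) (hn : 2 ≤ n)
    (e : EuclideanSpace ℝ (Fin n)) (he : ‖e‖ = 1)
    (μ : Measure (EuclideanSpace ℝ (Fin n))) [IsFiniteMeasure μ]
    (hcs : ∃ K : Set (EuclideanSpace ℝ (Fin n)), IsCompact K ∧ μ Kᶜ = 0)
    (hinv : SOInvariant e μ)
    (ϑ : EuclideanSpace ℝ (Fin n) →
      (EuclideanSpace ℝ (Fin n) ≃ₗᵢ[ℝ] EuclideanSpace ℝ (Fin n)))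
    (hϑ : ∀ x, x ≠ 0 → InSO (ϑ x) ∧ ϑ x e = ‖x‖⁻¹ • x) :
    (∀ (a : EuclideanSpace ℝ (Fin n)) (f : EuclideanSpace ℝ (Fin n) → ℝ),
        ConvexOn ℝ Set.univ f →
        ∀ x, PsiMu μ ϑ (fun y => f y + ⟪a, y⟫) x = PsiMu μ ϑ f x) ↔
    ∫ y, y ∂μ = 0 := by
  have hInt : Integrable (fun y : EuclideanSpace ℝ (Fin n) => y) μ :=
    integrable_of_cs hcs _ continuous_id
  constructor
  · intro h
    have he0 : e ≠ 0 := by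
      intro h0; rw [h0, norm_zero] at he; norm_num at he
    set m := ∫ y, y ∂μ with hm
    have key := h (ϑ e m) (fun _ => (0:ℝ)) (convexOn_const 0 convex_univ) e
    simp only [PsiMu, if_neg he0, he, one_smul, zero_add, integral_zero] at key
    have h1 : ∀ y, ⟪ϑ e m, ϑ e y⟫ = ⟪m, y⟫ := fun y => (ϑ e).inner_map_map m y
    rw [show (fun y => ⟪ϑ e m, ϑ e y⟫) = fun y => ⟪m, y⟫ from funext h1] at key
    rw [integral_inner hInt m, ← hm, inner_self_eq_zero] at key
    exact key
  · intro hm0 a f hf x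
    have hfc : Continuous f := by
      have := hf.continuousOn isOpen_univ
      rwa [← continuousOn_univ]
    by_cases hx : x = 0
    · simp [PsiMu, hx]
    · simp only [PsiMu, if_neg hx]
      have hg : Integrable (fun y => f (‖x‖ • ϑ x y)) μ :=
        integrable_of_cs hcs _ (hfc.comp ((ϑ x).continuous.const_smul ‖x‖ : Continuous fun y => ‖x‖ • ϑ x y))
      have hinner : Integrable (fun y : EuclideanSpace ℝ (Fin n) =>
          ⟪a, ‖x‖ • ϑ x y⟫) μ :=
        integrable_of_cs hcs _
          (continuous_const.inner ((ϑ x).continuous.const_smul ‖x‖))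
      rw [integral_add hg hinner]
      have h2 : ∀ y, ⟪a, ‖x‖ • ϑ x y⟫ = ⟪‖x‖ • (ϑ x).symm a, y⟫ := by
        intro y
        rw [real_inner_smul_right, real_inner_smul_left]
        congr 1
        conv_lhs => rw [← (ϑ x).apply_symm_apply a]
        rw [(ϑ x).inner_map_map]
      rw [show (fun y => ⟪a, ‖x‖ • ϑ x y⟫) = fun y => ⟪‖x‖ • (ϑ x).symm a, y⟫ from funext h2,
        integral_inner hInt, hm0, inner_zero_right, add_zero]
end

section
/- Let n ≥ 2 and let μ be a nonzero SO(n−1)-invariant nonnegative finite Borel measure on ℝⁿ with compact support. Call a function f : ℝⁿ → ℝ radially symmetric if f(ρ(x)) = f(x) for all x ∈ ℝⁿ and ρ ∈ SO(n). Then: (a) if the support of μ is contained in the unit sphere of ℝⁿ, then Ψ_μ(f)(x) = μ(ℝⁿ)·f(x) for every radially symmetric convex f : ℝⁿ → ℝ and every x ∈ ℝⁿ; (b) conversely, if there exists c > 0 such that Ψ_μ(f)(x) = c·f(x) for every radially symmetric convex f : ℝⁿ → ℝ and every x ∈ ℝⁿ, then the support of μ is contained in the unit sphere and c = μ(ℝⁿ).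 -/
open MeasureTheory
open scoped Classical

lemma inSO_symm_trans {n : ℕ} (σ τ : EuclideanSpace ℝ (Fin n) ≃ₗᵢ[ℝ] EuclideanSpace ℝ (Fin n))
    (hσ : InSO σ) (hτ : InSO τ) : InSO (σ.symm.trans τ) := by
  unfold InSO at *
  have hcomp : ((σ.symm.trans τ).toLinearEquiv : EuclideanSpace ℝ (Fin n) →ₗ[ℝ] EuclideanSpace ℝ (Fin n))
      = (τ.toLinearEquiv : EuclideanSpace ℝ (Fin n) →ₗ[ℝ] EuclideanSpace ℝ (Fin n)).comp
        (σ.symm.toLinearEquiv : EuclideanSpace ℝ (Fin n) →ₗ[ℝ] EuclideanSpace ℝ (Fin n)) := by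
    ext x; simp
  have hsymm : LinearMap.det (σ.symm.toLinearEquiv : EuclideanSpace ℝ (Fin n) →ₗ[ℝ] EuclideanSpace ℝ (Fin n)) = 1 := by
    have h2 : ((σ.toLinearEquiv : EuclideanSpace ℝ (Fin n) →ₗ[ℝ] EuclideanSpace ℝ (Fin n)).comp
        (σ.symm.toLinearEquiv : EuclideanSpace ℝ (Fin n) →ₗ[ℝ] EuclideanSpace ℝ (Fin n))) = LinearMap.id := by
      ext x; simp
    have := LinearMap.det_comp (σ.toLinearEquiv : EuclideanSpace ℝ (Fin n) →ₗ[ℝ] EuclideanSpace ℝ (Fin n))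
        (σ.symm.toLinearEquiv : EuclideanSpace ℝ (Fin n) →ₗ[ℝ] EuclideanSpace ℝ (Fin n))
    rw [h2, LinearMap.det_id, hσ, one_mul] at this
    exact this.symm
  rw [hcomp, LinearMap.det_comp, hτ, hsymm, one_mul]

theorem stmt16 (n : ℕ) (hn : 2 ≤ n)
    (e : EuclideanSpace ℝ (Fin n)) (he : ‖e‖ = 1)
    (μ : Measure (EuclideanSpace ℝ (Fin n))) [IsFiniteMeasure μ]
    (hcs : ∃ K : Set (EuclideanSpace ℝ (Fin n)), IsCompact K ∧ μ Kᶜ = 0)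
    (hinv : SOInvariant e μ) (hne : μ ≠ 0)
    (ϑ : EuclideanSpace ℝ (Fin n) →
      (EuclideanSpace ℝ (Fin n) ≃ₗᵢ[ℝ] EuclideanSpace ℝ (Fin n)))
    (hϑ : ∀ x, x ≠ 0 → InSO (ϑ x) ∧ ϑ x e = ‖x‖⁻¹ • x) :
    (μ {y : EuclideanSpace ℝ (Fin n) | ‖y‖ = 1}ᶜ = 0 →
      ∀ f : EuclideanSpace ℝ (Fin n) → ℝ, ConvexOn ℝ Set.univ f →
        (∀ ρ : EuclideanSpace ℝ (Fin n) ≃ₗᵢ[ℝ] EuclideanSpace ℝ (Fin n),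
          InSO ρ → ∀ x, f (ρ x) = f x) →
        ∀ x, PsiMu μ ϑ f x = (μ Set.univ).toReal * f x) ∧
    (∀ c : ℝ, 0 < c →
      (∀ f : EuclideanSpace ℝ (Fin n) → ℝ, ConvexOn ℝ Set.univ f →
        (∀ ρ : EuclideanSpace ℝ (Fin n) ≃ₗᵢ[ℝ] EuclideanSpace ℝ (Fin n),
          InSO ρ → ∀ x, f (ρ x) = f x) →
        ∀ x, PsiMu μ ϑ f x = c * f x) →
      μ {y : EuclideanSpace ℝ (Fin n) | ‖y‖ = 1}ᶜ = 0 ∧ c = (μ Set.univ).toReal) := by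
  have he0 : e ≠ 0 := by
    intro h; rw [h, norm_zero] at he; exact one_ne_zero he.symm
  -- radial functions are constant on spheres
  have key : ∀ (f : EuclideanSpace ℝ (Fin n) → ℝ),
      (∀ ρ : EuclideanSpace ℝ (Fin n) ≃ₗᵢ[ℝ] EuclideanSpace ℝ (Fin n),
        InSO ρ → ∀ x, f (ρ x) = f x) →
      ∀ u v : EuclideanSpace ℝ (Fin n), ‖u‖ = ‖v‖ → f u = f v := by
    intro f hrad u v huv
    by_cases hu : u = 0
    · have hv : v = 0 := by
        rw [hu, norm_zero] at huv; exact norm_eq_zero.mp huv.symm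
      rw [hu, hv]
    · have hv : v ≠ 0 := by
        intro h; rw [h, norm_zero, norm_eq_zero] at huv; exact hu huv
      obtain ⟨hdu, heu⟩ := hϑ u hu
      obtain ⟨hdv, hev⟩ := hϑ v hv
      have hnu : ‖u‖ ≠ 0 := norm_ne_zero_iff.mpr hu
      have hnv : ‖v‖ ≠ 0 := norm_ne_zero_iff.mpr hv
      set ρ := (ϑ u).symm.trans (ϑ v) with hρ
      have hρSO : InSO ρ := inSO_symm_trans _ _ hdu hdv
      have h1 : ϑ u (‖u‖ • e) = u := by
        rw [LinearIsometryEquiv.map_smul, heu, smul_smul, mul_inv_cancel₀ hnu, one_smul]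
      have h2 : (ϑ u).symm u = ‖u‖ • e := (ϑ u).symm_apply_eq.mpr h1.symm
      have hρu : ρ u = v := by
        rw [hρ, LinearIsometryEquiv.trans_apply, h2, LinearIsometryEquiv.map_smul, hev,
          smul_smul, huv, mul_inv_cancel₀ hnv, one_smul]
      calc f u = f (ρ u) := (hrad ρ hρSO u).symm
        _ = f v := by rw [hρu]
  constructor
  · -- part (a)
    intro hμ f hf hrad x
    by_cases hx : x = 0
    · rw [hx, PsiMu, if_pos rfl, mul_comm]
    · rw [PsiMu, if_neg hx]
      have hae1 : ∀ᵐ y ∂μ, ‖y‖ = 1 := by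
        rw [ae_iff]; exact hμ
      have hcongr : ∀ᵐ y ∂μ, f (‖x‖ • ϑ x y) = f x := by
        filter_upwards [hae1] with y hy
        apply key f hrad
        rw [norm_smul, LinearIsometryEquiv.norm_map, hy, Real.norm_eq_abs,
          abs_of_nonneg (norm_nonneg x), mul_one]
      rw [integral_congr_ae hcongr, integral_const, smul_eq_mul, measureReal_def]
  · -- part (b)
    intro c hc hΨ
    obtain ⟨K, hK, hKμ⟩ := hcs
    obtain ⟨R, hR⟩ := hK.isBounded.subset_closedBall 0
    have haeK : ∀ᵐ y ∂μ, y ∈ K := by rw [ae_iff]; exact hKμ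
    have haeR : ∀ᵐ y ∂μ, ‖y‖ ≤ R := by
      filter_upwards [haeK] with y hy
      exact mem_closedBall_zero_iff.mp (hR hy)
    have hInt1 : Integrable (fun y : EuclideanSpace ℝ (Fin n) => ‖y‖) μ := by
      refine Integrable.mono' (integrable_const R) continuous_norm.aestronglyMeasurable ?_
      filter_upwards [haeR] with y hy
      simpa using hy
    have hInt2 : Integrable (fun y : EuclideanSpace ℝ (Fin n) => ‖y‖ ^ 2) μ := by
      refine Integrable.mono' (integrable_const (R ^ 2)) ((continuous_norm.pow 2).aestronglyMeasurable) ?_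
      filter_upwards [haeR] with y hy
      have : ‖y‖ ^ 2 ≤ R ^ 2 := pow_le_pow_left₀ (norm_nonneg y) hy 2
      simpa [abs_of_nonneg (sq_nonneg ‖y‖)] using this
    -- c = μ(univ)
    have hc1 : (μ Set.univ).toReal = c := by
      have h := hΨ (fun _ => 1) (convexOn_const 1 convex_univ) (fun ρ _ x => rfl) e
      rw [PsiMu, if_neg he0] at h
      exact (by simpa using h : μ.real Set.univ = c)
    -- ∫ ‖y‖ = c
    have h1 : ∫ y, ‖y‖ ∂μ = c := by
      have h := hΨ (fun z => ‖z‖) convexOn_univ_norm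
        (fun ρ _ x => ρ.norm_map x) e
      rw [PsiMu, if_neg he0] at h
      simpa [norm_smul, he] using h
    -- ∫ ‖y‖² = c
    have hconv2 : ConvexOn ℝ Set.univ (fun z : EuclideanSpace ℝ (Fin n) => ‖z‖ ^ 2) := by
      refine ⟨convex_univ, fun x _ y _ a b ha hb hab => ?_⟩
      have hle : ‖a • x + b • y‖ ≤ a * ‖x‖ + b * ‖y‖ := by
        calc ‖a • x + b • y‖ ≤ ‖a • x‖ + ‖b • y‖ := norm_add_le _ _
          _ = a * ‖x‖ + b * ‖y‖ := by
            rw [norm_smul, norm_smul, Real.norm_eq_abs, Real.norm_eq_abs,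
              abs_of_nonneg ha, abs_of_nonneg hb]
      have hsq := (Even.convexOn_pow (even_two)).2 (Set.mem_univ ‖x‖) (Set.mem_univ ‖y‖) ha hb hab
      simp only [smul_eq_mul] at hsq
      calc ‖a • x + b • y‖ ^ 2 ≤ (a * ‖x‖ + b * ‖y‖) ^ 2 :=
            pow_le_pow_left₀ (norm_nonneg _) hle 2
        _ ≤ a * ‖x‖ ^ 2 + b * ‖y‖ ^ 2 := hsq
        _ = a • ‖x‖ ^ 2 + b • ‖y‖ ^ 2 := by simp [smul_eq_mul]
    have h2 : ∫ y, ‖y‖ ^ 2 ∂μ = c := by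
      have h := hΨ (fun z => ‖z‖ ^ 2) hconv2
        (fun ρ _ x => by simp [ρ.norm_map]) e
      rw [PsiMu, if_neg he0] at h
      simpa [norm_smul, he] using h
    -- ∫ (‖y‖-1)² = 0
    have hexp : ∀ y : EuclideanSpace ℝ (Fin n), (‖y‖ - 1 : ℝ) ^ 2 = ‖y‖ ^ 2 - 2 * ‖y‖ + 1 := by
      intro y; ring
    have hInt0 : Integrable (fun y : EuclideanSpace ℝ (Fin n) => (‖y‖ - 1 : ℝ) ^ 2) μ := by
      have : Integrable (fun y : EuclideanSpace ℝ (Fin n) => (‖y‖ ^ 2 - 2 * ‖y‖) + 1) μ := by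
        exact ((hInt2.sub (hInt1.const_mul 2)).add (integrable_const 1))
      simpa [hexp] using this
    have hIntm : Integrable (fun y : EuclideanSpace ℝ (Fin n) => 2 * ‖y‖) μ := by
      exact hInt1.const_mul 2
    have hInts : Integrable (fun y : EuclideanSpace ℝ (Fin n) => ‖y‖ ^ 2 - 2 * ‖y‖) μ := by
      exact hInt2.sub hIntm
    have hz : ∫ y, (‖y‖ - 1 : ℝ) ^ 2 ∂μ = 0 := by
      have e1 : ∫ y, (‖y‖ - 1 : ℝ) ^ 2 ∂μ
          = ∫ y, ((‖y‖ ^ 2 - 2 * ‖y‖) + 1) ∂μ := by simp_rw [hexp]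
      rw [e1, integral_add hInts (integrable_const 1),
        integral_sub hInt2 hIntm, integral_const_mul, h1, h2, integral_const,
        smul_eq_mul, mul_one, measureReal_def, hc1]
      ring
    have hae0 := (integral_eq_zero_iff_of_nonneg
      (fun y => sq_nonneg (‖y‖ - 1 : ℝ)) hInt0).mp hz
    have hae1 : ∀ᵐ y ∂μ, ‖y‖ = 1 := by
      filter_upwards [hae0] with y hy
      have : (‖y‖ - 1 : ℝ) ^ 2 = 0 := hy
      have := sq_eq_zero_iff.mp this
      linarith
    exact ⟨ae_iff.mp hae1, hc1.symm⟩
end
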